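/- arXiv:1304.3392 — 9 statements merged into one kernel-verified Lean document; each statement's English description precedes it below -/
import Mathlib

section
/- Let μ be a locally finite rotation-invariant measure on ℝⁿ with radial density w, and define the Hardy-type operator H_μ f(x) = sup_{R ≥ |x|} (1/μ(B_R)) ∫_{B_R} |f| dμ, where B_R is the ball of radius R centered at the origin. Then H_μ is of weak type (1,1) with constant 1: for all λ > 0, μ({x : H_μ f(x) > λ}) ≤ (1/λ) ∫_{ℝⁿ} |f| dμ. -/
open MeasureTheory Metric
open scoped ENNReal

/-- The Hardy-type operator `H_μ f (x) = sup_{R ≥ |x|} (1/μ(B_R)) ∫_{B_R} |f| dμ`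
associated with a locally finite rotation invariant measure `μ = w₀(|x|) dx` on `ℝⁿ`
is of weak type (1,1) with constant 1. The superlevel set `{H_μ f > λ}` is described as
the set of `x` admitting some `R ≥ ‖x‖` with `λ μ(B_R) < ∫_{B_R} |f| dμ`. -/
theorem stmt_4 (n : ℕ) (w₀ : ℝ → ℝ) (hw₀ : ∀ r, 0 ≤ w₀ r)
    (μ : Measure (EuclideanSpace ℝ (Fin n)))
    (hμ : μ = volume.withDensity fun x => ENNReal.ofReal (w₀ ‖x‖))
    [IsLocallyFiniteMeasure μ]
    (hpos : ∀ R : ℝ, 0 < R → 0 < μ (ball (0 : EuclideanSpace ℝ (Fin n)) R))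
    (f : EuclideanSpace ℝ (Fin n) → ℝ) (lam : ℝ≥0∞) (hlam : 0 < lam) :
    μ {x : EuclideanSpace ℝ (Fin n) | ∃ R : ℝ, ‖x‖ ≤ R ∧
        lam * μ (ball (0 : EuclideanSpace ℝ (Fin n)) R)
          < ∫⁻ y in ball (0 : EuclideanSpace ℝ (Fin n)) R, ‖f y‖₊ ∂μ}
      ≤ lam⁻¹ * ∫⁻ y, ‖f y‖₊ ∂μ := by
  have _dummy : True := trivial
  set I := ∫⁻ y, ‖f y‖₊ ∂μ with hI
  set S : Set ℝ := {R | lam * μ (ball (0 : EuclideanSpace ℝ (Fin n)) R)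
      < ∫⁻ y in ball (0 : EuclideanSpace ℝ (Fin n)) R, ‖f y‖₊ ∂μ} with hSdef
  set C := lam⁻¹ * I with hC
  -- μ is absolutely continuous wrt volume, so spheres are null
  have hac : μ ≪ (volume : Measure (EuclideanSpace ℝ (Fin n))) := by
    rw [hμ]; exact withDensity_absolutelyContinuous _ _
  -- each R in S is positive
  have hRpos : ∀ R ∈ S, 0 < R := by
    intro R hR
    by_contra h
    push_neg at h
    have hemp : ball (0 : EuclideanSpace ℝ (Fin n)) R = ∅ := ball_eq_empty.2 h
    rw [hSdef] at hR
    simp only [Set.mem_setOf_eq, hemp] at hR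
    simp at hR
  -- the key bound on balls with radius in S
  have hball : ∀ R ∈ S, μ (ball (0 : EuclideanSpace ℝ (Fin n)) R) ≤ C := by
    intro R hR
    have hRS : lam * μ (ball (0 : EuclideanSpace ℝ (Fin n)) R) < ∫⁻ y in ball (0 : EuclideanSpace ℝ (Fin n)) R, ‖f y‖₊ ∂μ := hR
    have hle : (∫⁻ y in ball (0 : EuclideanSpace ℝ (Fin n)) R, ‖f y‖₊ ∂μ) ≤ I := setLIntegral_le_lintegral _ _
    rcases eq_or_ne lam ∞ with hl | hl
    · exfalso
      have hne : μ (ball (0 : EuclideanSpace ℝ (Fin n)) R) ≠ 0 := (hpos R (hRpos R hR)).ne'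
      rw [hl, ENNReal.top_mul hne] at hRS
      exact (not_top_lt hRS)
    · calc μ (ball (0 : EuclideanSpace ℝ (Fin n)) R) = lam⁻¹ * (lam * μ (ball (0 : EuclideanSpace ℝ (Fin n)) R)) := by
            rw [← mul_assoc, ENNReal.inv_mul_cancel hlam.ne' hl, one_mul]
      _ ≤ lam⁻¹ * I := by
            exact mul_le_mul_right (le_trans hRS.le hle) _
  -- the superlevel set
  have hEset : {x : EuclideanSpace ℝ (Fin n) | ∃ R : ℝ, ‖x‖ ≤ R ∧
      lam * μ (ball (0 : EuclideanSpace ℝ (Fin n)) R) < ∫⁻ y in ball (0 : EuclideanSpace ℝ (Fin n)) R, ‖f y‖₊ ∂μ}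
      = {x : EuclideanSpace ℝ (Fin n) | ∃ R ∈ S, ‖x‖ ≤ R} := by
    ext x; constructor
    · rintro ⟨R, hxR, hR⟩; exact ⟨R, hR, hxR⟩
    · rintro ⟨R, hR, hxR⟩; exact ⟨R, hxR, hR⟩
  rw [hEset]
  rcases Set.eq_empty_or_nonempty S with hSe | ⟨R₀, hR₀⟩
  · have : {x : EuclideanSpace ℝ (Fin n) | ∃ R ∈ S, ‖x‖ ≤ R} = ∅ := by
      ext x; simp [hSe]
    simp [this]
  by_cases hbdd : BddAbove S
  · -- bounded case
    set t := sSup S with ht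
    have htS : ∀ R ∈ S, R ≤ t := fun R hR => le_csSup hbdd hR
    have htpos : 0 < t := lt_of_lt_of_le (hRpos R₀ hR₀) (htS R₀ hR₀)
    have hsub : {x : EuclideanSpace ℝ (Fin n) | ∃ R ∈ S, ‖x‖ ≤ R} ⊆ closedBall (0 : EuclideanSpace ℝ (Fin n)) t := by
      rintro x ⟨R, hR, hxR⟩
      simp only [mem_closedBall, dist_zero_right]
      exact le_trans hxR (htS R hR)
    -- approximating sequence
    have hseq : ∀ k : ℕ, ∃ r ∈ S, t - 1 / (k + 1) < r := by
      intro k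
      apply exists_lt_of_lt_csSup ⟨R₀, hR₀⟩
      have : (0 : ℝ) < 1 / (k + 1) := by positivity
      linarith
    choose r hrS hrlt using hseq
    have hdir : Directed (· ⊆ ·) fun k : ℕ => ball (0 : EuclideanSpace ℝ (Fin n)) (r k) := by
      intro i j
      rcases le_total (r i) (r j) with h | h
      · exact ⟨j, ball_subset_ball h, subset_rfl⟩
      · exact ⟨i, subset_rfl, ball_subset_ball h⟩
    have hcover : ball (0 : EuclideanSpace ℝ (Fin n)) t ⊆ ⋃ k, ball (0 : EuclideanSpace ℝ (Fin n)) (r k) := by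
      intro y hy
      simp only [mem_ball, dist_zero_right] at hy
      obtain ⟨k, hk⟩ := exists_nat_one_div_lt (sub_pos.2 hy)
      refine Set.mem_iUnion.2 ⟨k, ?_⟩
      simp only [mem_ball, dist_zero_right]
      have := hrlt k
      push_cast at hk this ⊢
      linarith
    have hballt : μ (ball (0 : EuclideanSpace ℝ (Fin n)) t) ≤ C := by
      calc μ (ball (0 : EuclideanSpace ℝ (Fin n)) t) ≤ μ (⋃ k, ball (0 : EuclideanSpace ℝ (Fin n)) (r k)) := measure_mono hcover
        _ = ⨆ k, μ (ball (0 : EuclideanSpace ℝ (Fin n)) (r k)) := hdir.measure_iUnion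
        _ ≤ C := iSup_le fun k => hball _ (hrS k)
    have hsphere : μ (sphere (0 : EuclideanSpace ℝ (Fin n)) t) = 0 :=
      hac (Measure.addHaar_sphere_of_ne_zero _ _ htpos.ne')
    calc μ {x : EuclideanSpace ℝ (Fin n) | ∃ R ∈ S, ‖x‖ ≤ R} ≤ μ (closedBall (0 : EuclideanSpace ℝ (Fin n)) t) := measure_mono hsub
      _ ≤ μ (ball (0 : EuclideanSpace ℝ (Fin n)) t) + μ (sphere (0 : EuclideanSpace ℝ (Fin n)) t) := by
          rw [← ball_union_sphere]; exact measure_union_le _ _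
      _ = μ (ball (0 : EuclideanSpace ℝ (Fin n)) t) := by rw [hsphere, add_zero]
      _ ≤ C := hballt
  · -- unbounded case
    have hseq : ∀ k : ℕ, ∃ r ∈ S, (k : ℝ) < r := by
      intro k
      by_contra h
      push_neg at h
      exact hbdd ⟨k, fun R hR => (h R hR)⟩
    choose r hrS hrlt using hseq
    have hdir : Directed (· ⊆ ·) fun k : ℕ => ball (0 : EuclideanSpace ℝ (Fin n)) (r k) := by
      intro i j
      rcases le_total (r i) (r j) with h | h
      · exact ⟨j, ball_subset_ball h, subset_rfl⟩
      · exact ⟨i, subset_rfl, ball_subset_ball h⟩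
    have hcover : {x : EuclideanSpace ℝ (Fin n) | ∃ R ∈ S, ‖x‖ ≤ R} ⊆ ⋃ k, ball (0 : EuclideanSpace ℝ (Fin n)) (r k) := by
      rintro x ⟨R, hR, hxR⟩
      obtain ⟨k, hk⟩ := exists_nat_gt ‖x‖
      refine Set.mem_iUnion.2 ⟨k, ?_⟩
      simp only [mem_ball, dist_zero_right]
      exact lt_trans hk (hrlt k)
    calc μ {x : EuclideanSpace ℝ (Fin n) | ∃ R ∈ S, ‖x‖ ≤ R} ≤ μ (⋃ k, ball (0 : EuclideanSpace ℝ (Fin n)) (r k)) := measure_mono hcover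
      _ = ⨆ k, μ (ball (0 : EuclideanSpace ℝ (Fin n)) (r k)) := hdir.measure_iUnion
      _ ≤ C := iSup_le fun k => hball _ (hrS k)
end

section
/- Let w₀ : (0,∞) → (0,∞) be measurable and essentially constant over dyadic intervals with constant β ≥ 1 (i.e. sup_{[R,2R]} w₀ ≤ β inf_{[R,2R]} w₀ for all R > 0). Then for every dimension n with 2ⁿ > 2β and every R > 0, the measure of the origin-centered ball satisfies μ(B_R) = ∫_{B_R} w₀(|x|) dx ≤ 2β · w₀(R) · |B_R|, where |B_R| is the Lebesgue measure of B_R. -/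
open MeasureTheory Metric
open scoped ENNReal

/-- If `w₀` is essentially constant over dyadic intervals with constant `β ≥ 1`, then in
every dimension `n` with `2^n > 2β` and for every `R > 0` the measure of the
origin-centered ball satisfies `μ(B_R) = ∫_{B_R} w₀(|x|) dx ≤ 2β w₀(R) |B_R|`. -/
theorem stmt_7 (w₀ : ℝ → ℝ) (hw : ∀ r : ℝ, 0 < r → 0 < w₀ r)
    (β : ℝ) (hβ : 1 ≤ β)
    (hdyad : ∀ R : ℝ, 0 < R → ∀ s ∈ Set.Icc R (2 * R), ∀ t ∈ Set.Icc R (2 * R),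
      w₀ s ≤ β * w₀ t)
    (n : ℕ) (hn : 2 * β < 2 ^ n) (R : ℝ) (hR : 0 < R) :
    ∫⁻ x in ball (0 : EuclideanSpace ℝ (Fin n)) R, ENNReal.ofReal (w₀ ‖x‖)
      ≤ ENNReal.ofReal (2 * β * w₀ R) * volume (ball (0 : EuclideanSpace ℝ (Fin n)) R) := by
  classical
  have hβ0 : (0:ℝ) < β := lt_of_lt_of_le one_pos hβ
  have hwR : (0:ℝ) < w₀ R := hw R hR
  have hn2 : (2:ℝ) < 2 ^ n := lt_of_le_of_lt (by linarith) hn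
  have hn1 : 1 ≤ n := by
    by_contra h
    push_neg at h
    interval_cases n <;> norm_num at hn2
  haveI : Nonempty (Fin n) := ⟨⟨0, hn1⟩⟩
  haveI : Nontrivial (EuclideanSpace ℝ (Fin n)) := inferInstance
  have hRj : ∀ j : ℕ, (0:ℝ) < R / 2 ^ j := fun j => div_pos hR (by positivity)
  have h2half : ∀ j : ℕ, 2 * (R / 2 ^ (j+1)) = R / 2 ^ j := by
    intro j
    field_simp
    ring
  have key1 : ∀ j : ℕ, w₀ (R / 2 ^ j) ≤ β ^ j * w₀ R := by
    intro j
    induction j with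
    | zero => simp
    | succ j ih =>
      have hpos := hRj (j+1)
      have h1 : w₀ (R / 2 ^ (j+1)) ≤ β * w₀ (2 * (R / 2 ^ (j+1))) :=
        hdyad (R / 2 ^ (j+1)) hpos _ ⟨le_refl _, by linarith⟩ _ ⟨by linarith, le_refl _⟩
      rw [h2half j] at h1
      calc w₀ (R / 2 ^ (j+1)) ≤ β * w₀ (R / 2 ^ j) := h1
        _ ≤ β * (β ^ j * w₀ R) := mul_le_mul_of_nonneg_left ih hβ0.le
        _ = β ^ (j+1) * w₀ R := by ring
  have key : ∀ j : ℕ, ∀ s : ℝ, R / 2 ^ (j+1) ≤ s → s < R / 2 ^ j →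
      w₀ s ≤ β ^ (j+1) * w₀ R := by
    intro j s h1 h2
    have hpos := hRj (j+1)
    have hs : s ∈ Set.Icc (R / 2 ^ (j+1)) (2 * (R / 2 ^ (j+1))) :=
      ⟨h1, by rw [h2half j]; exact h2.le⟩
    have ht : 2 * (R / 2 ^ (j+1)) ∈ Set.Icc (R / 2 ^ (j+1)) (2 * (R / 2 ^ (j+1))) :=
      ⟨by linarith, le_refl _⟩
    have h3 := hdyad (R / 2 ^ (j+1)) hpos s hs _ ht
    rw [h2half j] at h3
    calc w₀ s ≤ β * w₀ (R / 2 ^ j) := h3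
      _ ≤ β * (β ^ j * w₀ R) := mul_le_mul_of_nonneg_left (key1 j) hβ0.le
      _ = β ^ (j+1) * w₀ R := by ring
  set E := EuclideanSpace ℝ (Fin n) with hE
  set A : ℕ → Set E := fun j => ball (0:E) (R / 2 ^ j) \ ball (0:E) (R / 2 ^ (j+1)) with hA
  set c : ℝ≥0∞ := volume (ball (0:E) 1) with hc
  set f : E → ℝ≥0∞ := fun x => ENNReal.ofReal (w₀ ‖x‖) with hf
  have hcover : ball (0:E) R ⊆ (⋃ j, A j) ∪ {0} := by
    intro x hx
    rcases eq_or_ne x 0 with h | h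
    · right; simp [h]
    · left
      have hx0 : (0:ℝ) < ‖x‖ := norm_pos_iff.2 h
      have hxR : ‖x‖ < R := by rwa [mem_ball_zero_iff] at hx
      have hP : ∃ k : ℕ, R / 2 ^ (k+1) ≤ ‖x‖ := by
        obtain ⟨k, hk⟩ := pow_unbounded_of_one_lt (R / ‖x‖) (one_lt_two (α := ℝ))
        refine ⟨k, ?_⟩
        rw [div_le_iff₀ (by positivity)]
        rw [div_lt_iff₀ hx0] at hk
        have h2k : (2:ℝ) ^ k ≤ 2 ^ (k+1) := by
          apply pow_le_pow_right₀ (by norm_num) (by omega)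
        nlinarith
      have hj1 : R / 2 ^ (Nat.find hP + 1) ≤ ‖x‖ := Nat.find_spec hP
      have hj2 : ‖x‖ < R / 2 ^ (Nat.find hP) := by
        rcases Nat.eq_zero_or_pos (Nat.find hP) with h0 | hposj
        · rw [h0]; simpa using hxR
        · have hmin := Nat.find_min hP (Nat.pred_lt hposj.ne')
          push_neg at hmin
          have hlt : ‖x‖ < R / 2 ^ (Nat.find hP - 1 + 1) := hmin
          have heq : Nat.find hP - 1 + 1 = Nat.find hP := by omega
          rwa [heq] at hlt
      refine Set.mem_iUnion.2 ⟨Nat.find hP, ?_, ?_⟩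
      · rw [mem_ball_zero_iff]; exact hj2
      · rw [mem_ball_zero_iff]; exact not_lt.2 hj1
  set K : ℝ≥0∞ := ENNReal.ofReal (β * w₀ R * R ^ n) with hK
  set r : ℝ≥0∞ := ENNReal.ofReal (β / 2 ^ n) with hr
  have hterm : ∀ j : ℕ, ∫⁻ x in A j, f x ≤ K * c * r ^ j := by
    intro j
    have hballvol : volume (ball (0:E) (R / 2 ^ j)) =
        ENNReal.ofReal ((R / 2 ^ j) ^ n) * c := by
      have hfin : Module.finrank ℝ E = n := finrank_euclideanSpace_fin
      rw [hc, Measure.addHaar_ball volume (0:E) (hRj j).le, hfin]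
    have hreal : β ^ (j+1) * w₀ R * (R / 2 ^ j) ^ n = β * w₀ R * R ^ n * (β / 2 ^ n) ^ j := by
      rw [div_pow, div_pow, ← pow_mul, ← pow_mul, Nat.mul_comm]
      field_simp
      ring
    calc ∫⁻ x in A j, f x ≤ ∫⁻ _x in A j, ENNReal.ofReal (β ^ (j+1) * w₀ R) := by
          apply setLIntegral_mono measurable_const
          intro x hx
          obtain ⟨hx1, hx2⟩ := hx
          rw [mem_ball_zero_iff] at hx1
          rw [mem_ball_zero_iff] at hx2
          push_neg at hx2
          exact ENNReal.ofReal_le_ofReal (key j ‖x‖ hx2 hx1)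
      _ = ENNReal.ofReal (β ^ (j+1) * w₀ R) * volume (A j) := setLIntegral_const _ _
      _ ≤ ENNReal.ofReal (β ^ (j+1) * w₀ R) * volume (ball (0:E) (R / 2 ^ j)) :=
          mul_le_mul_right (measure_mono Set.diff_subset) _
      _ = K * c * r ^ j := by
          rw [hballvol, ← mul_assoc, ← ENNReal.ofReal_mul (by positivity), hreal,
            ENNReal.ofReal_mul (by positivity), ENNReal.ofReal_pow (by positivity), hK, hr]
          ring
  have hgeom : ∑' j : ℕ, r ^ j ≤ 2 := by
    rw [ENNReal.tsum_geometric]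
    have hr12 : r ≤ 2⁻¹ := by
      rw [hr, ← ENNReal.ofReal_ofNat 2, ← ENNReal.ofReal_inv_of_pos (by norm_num)]
      apply ENNReal.ofReal_le_ofReal
      rw [div_le_iff₀ (by positivity)]
      nlinarith
    have h12 : (2:ℝ≥0∞)⁻¹ ≤ 1 - r := by
      calc (2:ℝ≥0∞)⁻¹ = 1 - 2⁻¹ := by
            rw [ENNReal.one_sub_inv_two]
        _ ≤ 1 - r := tsub_le_tsub_left hr12 1
    calc (1 - r)⁻¹ ≤ ((2:ℝ≥0∞)⁻¹)⁻¹ := ENNReal.inv_le_inv.2 h12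
      _ = 2 := inv_inv 2
  have hRvol : volume (ball (0:E) R) = ENNReal.ofReal (R ^ n) * c := by
    have hfin : Module.finrank ℝ E = n := finrank_euclideanSpace_fin
    rw [hc, Measure.addHaar_ball volume (0:E) hR.le, hfin]
  have hzero : ∫⁻ x in ({0} : Set E), f x = 0 := by
    apply setLIntegral_measure_zero
    exact measure_singleton 0
  calc ∫⁻ x in ball (0:E) R, f x
      ≤ ∫⁻ x in (⋃ j, A j) ∪ {0}, f x := lintegral_mono_set hcover
    _ ≤ (∫⁻ x in ⋃ j, A j, f x) + ∫⁻ x in ({0} : Set E), f x := lintegral_union_le _ _ _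
    _ = ∫⁻ x in ⋃ j, A j, f x := by rw [hzero, add_zero]
    _ ≤ ∑' j : ℕ, ∫⁻ x in A j, f x := lintegral_iUnion_le _ _
    _ ≤ ∑' j : ℕ, K * c * r ^ j := ENNReal.tsum_le_tsum hterm
    _ = K * c * ∑' j : ℕ, r ^ j := ENNReal.tsum_mul_left
    _ ≤ K * c * 2 := mul_le_mul_right hgeom _
    _ = ENNReal.ofReal (2 * β * w₀ R) * volume (ball (0:E) R) := by
        have h2 : ENNReal.ofReal (β * w₀ R * R ^ n) * 2
            = ENNReal.ofReal (2 * β * w₀ R * R ^ n) := by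
          rw [show (2:ℝ≥0∞) = ENNReal.ofReal 2 from by simp,
            ← ENNReal.ofReal_mul (by positivity)]
          congr 1
          ring
        calc K * c * 2 = (K * 2) * c := by ring
          _ = ENNReal.ofReal (2 * β * w₀ R * R ^ n) * c := by rw [hK, h2]
          _ = ENNReal.ofReal (2 * β * w₀ R) * (ENNReal.ofReal (R ^ n) * c) := by
              rw [ENNReal.ofReal_mul (by positivity), mul_assoc]
          _ = ENNReal.ofReal (2 * β * w₀ R) * volume (ball (0:E) R) := by rw [hRvol]
end

section
/- Let w₀ be essentially constant over dyadic intervals with constant β and fix p > 1. Then there exists N ∈ ℕ depending only on p and β such that for all n ≥ N the radial weight w(x) = w₀(|x|) belongs to the Muckenhoupt class A_p(ℝⁿ), with A_p constant bounded by max((2·3ⁿ)ᵖ β², β²). -/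
open MeasureTheory Metric
open scoped ENNReal

lemma aux_four (w₀ : ℝ → ℝ) (β : ℝ) (hβ : 1 ≤ β)
    (hdyad : ∀ R : ℝ, 0 < R → ∀ s ∈ Set.Icc R (2 * R), ∀ t ∈ Set.Icc R (2 * R),
      w₀ s ≤ β * w₀ t)
    (hw : ∀ r : ℝ, 0 < r → 0 < w₀ r)
    (a : ℝ) (ha : 0 < a) {s t : ℝ} (hs : s ∈ Set.Icc a (4*a)) (ht : t ∈ Set.Icc a (4*a)) :
    w₀ s ≤ β^2 * w₀ t := by
  obtain ⟨hs1, hs2⟩ := hs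
  obtain ⟨ht1, ht2⟩ := ht
  have h1 : w₀ s ≤ β * w₀ (2*a) := by
    rcases le_total s (2*a) with h | h
    · exact hdyad a ha s ⟨hs1, h⟩ (2*a) ⟨by linarith, le_rfl⟩
    · exact hdyad (2*a) (by linarith) s ⟨h, by linarith⟩ (2*a) ⟨le_rfl, by linarith⟩
  have h2 : w₀ (2*a) ≤ β * w₀ t := by
    rcases le_total t (2*a) with h | h
    · exact hdyad a ha (2*a) ⟨by linarith, le_rfl⟩ t ⟨ht1, h⟩
    · exact hdyad (2*a) (by linarith) (2*a) ⟨le_rfl, by linarith⟩ t ⟨h, by linarith⟩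
  have hβ0 : (0:ℝ) ≤ β := by linarith
  calc w₀ s ≤ β * w₀ (2*a) := h1
    _ ≤ β * (β * w₀ t) := by exact mul_le_mul_of_nonneg_left h2 hβ0
    _ = β^2 * w₀ t := by ring

lemma aux_dyadic (w₀ : ℝ → ℝ) (β : ℝ) (hβ : 1 ≤ β)
    (hdyad : ∀ R : ℝ, 0 < R → ∀ s ∈ Set.Icc R (2 * R), ∀ t ∈ Set.Icc R (2 * R),
      w₀ s ≤ β * w₀ t)
    (S : ℝ) (hS : 0 < S) :
    ∀ (k : ℕ) (t : ℝ), S/2^(k+1) ≤ t → t ≤ S/2^k →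
      w₀ t ≤ β^(k+1) * w₀ (S/2) ∧ w₀ (S/2) ≤ β^(k+1) * w₀ t := by
  have hβ0 : (0:ℝ) ≤ β := by linarith
  intro k
  induction k with
  | zero =>
    intro t h1 h2
    have hint : t ∈ Set.Icc (S/2) (2*(S/2)) := by
      constructor <;> [skip; skip] <;> · norm_num at h1 h2 ⊢ <;> linarith
    have hmid : (S/2) ∈ Set.Icc (S/2) (2*(S/2)) := ⟨le_rfl, by linarith⟩
    refine ⟨?_, ?_⟩
    · simpa using hdyad (S/2) (by linarith) t hint (S/2) hmid
    · simpa using hdyad (S/2) (by linarith) (S/2) hmid t hint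
  | succ k ih =>
    intro t h1 h2
    have hR : (0:ℝ) < S/2^(k+2) := by positivity
    have key : (2:ℝ) * (S/2^(k+2)) = S/2^(k+1) := by
      rw [pow_succ]; field_simp
    have hint : t ∈ Set.Icc (S/2^(k+2)) (2*(S/2^(k+2))) := ⟨h1, by rw [key]; exact h2⟩
    have hmid : (S/2^(k+1)) ∈ Set.Icc (S/2^(k+2)) (2*(S/2^(k+2))) := by
      rw [key]
      refine ⟨?_, le_rfl⟩
      apply div_le_div_of_nonneg_left hS.le (by positivity)
      apply pow_le_pow_right₀ <;> norm_num
    have ihm := ih (S/2^(k+1)) le_rfl (by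
      apply div_le_div_of_nonneg_left hS.le (by positivity)
      apply pow_le_pow_right₀ <;> norm_num)
    have h1' : w₀ t ≤ β * w₀ (S/2^(k+1)) := hdyad _ hR t hint _ hmid
    have h2' : w₀ (S/2^(k+1)) ≤ β * w₀ t := hdyad _ hR _ hmid t hint
    have hbp : (0:ℝ) ≤ β^(k+1) := by positivity
    constructor
    · calc w₀ t ≤ β * w₀ (S/2^(k+1)) := h1'
        _ ≤ β * (β^(k+1) * w₀ (S/2)) := mul_le_mul_of_nonneg_left ihm.1 hβ0
        _ = β^(k+1+1) * w₀ (S/2) := by ring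
    · calc w₀ (S/2) ≤ β^(k+1) * w₀ (S/2^(k+1)) := ihm.2
        _ ≤ β^(k+1) * (β * w₀ t) := mul_le_mul_of_nonneg_left h2' hbp
        _ = β^(k+1+1) * w₀ t := by ring


lemma annuli_bound (n : ℕ) (hn : 1 ≤ n) (g : ℝ → ℝ) (S c K : ℝ) (hS : 0 < S)
    (hc : 0 ≤ c) (hK : 1 ≤ K)
    (hbound : ∀ (k : ℕ) (t : ℝ), S/2^(k+1) ≤ t → t ≤ S/2^k → g t ≤ K^(k+1) * c)
    (hKn : 2 * K ≤ 2^n) :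
    ∫⁻ y in ball (0 : EuclideanSpace ℝ (Fin n)) S, ENNReal.ofReal (g ‖y‖)
      ≤ ENNReal.ofReal (2*K*c) * volume (ball (0 : EuclideanSpace ℝ (Fin n)) S) := by
  classical
  set E := EuclideanSpace ℝ (Fin n)
  set B1 := volume (ball (0 : E) 1) with hB1
  have hfr : Module.finrank ℝ E = n := finrank_euclideanSpace_fin
  set A : ℕ → Set E := fun k => {y : E | S/2^(k+1) ≤ ‖y‖ ∧ ‖y‖ ≤ S/2^k} with hA
  -- coverage
  have hcover : ball (0:E) S ⊆ {0} ∪ ⋃ k, A k := by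
    intro y hy
    rcases eq_or_ne y 0 with rfl | h0
    · left; simp
    right
    have hny : 0 < ‖y‖ := norm_pos_iff.2 h0
    have hyS : ‖y‖ < S := by simpa [dist_zero_right] using mem_ball.1 hy
    have hex : ∃ k : ℕ, S/2^(k+1) < ‖y‖ := by
      obtain ⟨k, hk⟩ := pow_unbounded_of_one_lt (S/‖y‖) (one_lt_two (α := ℝ))
      refine ⟨k, ?_⟩
      rw [div_lt_iff₀ (by positivity)] at hk ⊢
      have : (2:ℝ)^k ≤ 2^(k+1) := by
        apply pow_le_pow_right₀ <;> norm_num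
      nlinarith
    refine Set.mem_iUnion.2 ⟨Nat.find hex, (Nat.find_spec hex).le, ?_⟩
    rcases Nat.eq_zero_or_pos (Nat.find hex) with h | h
    · rw [h]; simpa using hyS.le
    · obtain ⟨m, hm⟩ : ∃ m, Nat.find hex = m + 1 := ⟨Nat.find hex - 1, by omega⟩
      have h2 := Nat.find_min hex (show m < Nat.find hex by omega)
      push_neg at h2
      rw [hm]
      exact h2
  -- measure of the singleton
  have h0 : volume ({(0:E)} : Set E) = 0 := by
    have h := Measure.addHaar_closedBall (volume : Measure E) (0:E) (le_refl (0:ℝ))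
    rw [closedBall_zero, hfr, zero_pow (by omega : n ≠ 0)] at h
    simpa using h
  have hAk : ∀ k, MeasurableSet (A k) := by
    intro k
    have : A k = (fun y : E => ‖y‖) ⁻¹' (Set.Icc (S/2^(k+1)) (S/2^k)) := rfl
    rw [this]
    exact measurable_norm measurableSet_Icc
  have hgeo : ∀ k : ℕ, K^(k+1) * c * (S/2^k)^n ≤ (K*c*S^n) * (1/2)^k := by
    intro k
    have hpow : ((2:ℝ)^k)^n = ((2:ℝ)^n)^k := by
      rw [← pow_mul, ← pow_mul, Nat.mul_comm]
    have h1 : K/2^n ≤ 1/2 := by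
      rw [div_le_div_iff₀ (by positivity) (by norm_num)]
      linarith
    have h2 : (K/2^n)^k ≤ (1/2)^k := pow_le_pow_left₀ (by positivity) h1 k
    have hid : K^(k+1)*c*(S/2^k)^n = (K*c*S^n) * (K/2^n)^k := by
      rw [div_pow, div_pow, hpow]
      field_simp
      ring
    rw [hid]
    exact mul_le_mul_of_nonneg_left h2 (by positivity)
  -- per-annulus bound
  have hann : ∀ k : ℕ, ∫⁻ y in A k, ENNReal.ofReal (g ‖y‖)
      ≤ ENNReal.ofReal (K*c*S^n) * (ENNReal.ofReal (1/2))^k * B1 := by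
    intro k
    have hstep1 : ∫⁻ y in A k, ENNReal.ofReal (g ‖y‖)
        ≤ ∫⁻ _ in A k, ENNReal.ofReal (K^(k+1)*c) := by
      refine setLIntegral_mono' (hAk k) (fun y hy => ?_)
      exact ENNReal.ofReal_le_ofReal (hbound k ‖y‖ hy.1 hy.2)
    have hsub : A k ⊆ closedBall (0:E) (S/2^k) := by
      intro y hy
      simpa [dist_zero_right] using hy.2
    have hvol : volume (A k) ≤ ENNReal.ofReal ((S/2^k)^n) * B1 := by
      calc volume (A k) ≤ volume (closedBall (0:E) (S/2^k)) := measure_mono hsub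
        _ = ENNReal.ofReal ((S/2^k)^n) * B1 := by
            rw [Measure.addHaar_closedBall (volume : Measure E) (0:E) (by positivity), hfr]
    calc ∫⁻ y in A k, ENNReal.ofReal (g ‖y‖)
        ≤ ∫⁻ _ in A k, ENNReal.ofReal (K^(k+1)*c) := hstep1
      _ = ENNReal.ofReal (K^(k+1)*c) * volume (A k) := setLIntegral_const _ _
      _ ≤ ENNReal.ofReal (K^(k+1)*c) * (ENNReal.ofReal ((S/2^k)^n) * B1) :=
          mul_le_mul_right hvol _
      _ = ENNReal.ofReal (K^(k+1)*c*(S/2^k)^n) * B1 := by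
          rw [← mul_assoc, ← ENNReal.ofReal_mul (by positivity)]
      _ ≤ ENNReal.ofReal ((K*c*S^n) * (1/2)^k) * B1 := by
          exact mul_le_mul_left (ENNReal.ofReal_le_ofReal (hgeo k)) _
      _ = ENNReal.ofReal (K*c*S^n) * (ENNReal.ofReal (1/2))^k * B1 := by
          rw [ENNReal.ofReal_mul (by positivity), ENNReal.ofReal_pow (by norm_num)]
  -- sum up
  have htsum : ∑' k : ℕ, (ENNReal.ofReal (1/2) : ℝ≥0∞)^k = 2 := by
    have : (ENNReal.ofReal (1/2) : ℝ≥0∞) = 2⁻¹ := by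
      rw [ENNReal.ofReal_div_of_pos (by norm_num)]
      norm_num
    rw [this, ENNReal.tsum_geometric, ENNReal.one_sub_inv_two, inv_inv]
  have hVol : volume (ball (0:E) S) = ENNReal.ofReal (S^n) * B1 := by
    rw [Measure.addHaar_ball_of_pos (volume : Measure E) (0:E) hS, hfr]
  calc ∫⁻ y in ball (0:E) S, ENNReal.ofReal (g ‖y‖)
      ≤ ∫⁻ y in {(0:E)} ∪ ⋃ k, A k, ENNReal.ofReal (g ‖y‖) := lintegral_mono_set hcover
    _ ≤ (∫⁻ y in ({(0:E)} : Set E), ENNReal.ofReal (g ‖y‖))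
        + ∫⁻ y in ⋃ k, A k, ENNReal.ofReal (g ‖y‖) := lintegral_union_le _ _ _
    _ = ∫⁻ y in ⋃ k, A k, ENNReal.ofReal (g ‖y‖) := by
        rw [setLIntegral_measure_zero _ _ h0, zero_add]
    _ ≤ ∑' k, ∫⁻ y in A k, ENNReal.ofReal (g ‖y‖) := lintegral_iUnion_le _ _
    _ ≤ ∑' k, ENNReal.ofReal (K*c*S^n) * (ENNReal.ofReal (1/2))^k * B1 :=
        ENNReal.tsum_le_tsum hann
    _ = ENNReal.ofReal (K*c*S^n) * (∑' k : ℕ, (ENNReal.ofReal (1/2))^k) * B1 := by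
        rw [ENNReal.tsum_mul_right, ENNReal.tsum_mul_left]
    _ = ENNReal.ofReal (K*c*S^n) * 2 * B1 := by rw [htsum]
    _ = ENNReal.ofReal (2*K*c) * (ENNReal.ofReal (S^n) * B1) := by
        have h2 : ENNReal.ofReal (K*c*S^n) * 2 = ENNReal.ofReal (2*K*c) * ENNReal.ofReal (S^n) := by
          rw [← ENNReal.ofReal_ofNat 2, ← ENNReal.ofReal_mul (by positivity),
            ← ENNReal.ofReal_mul (by positivity)]
          congr 1
          ring
        rw [← mul_assoc] at *
        rw [h2, mul_assoc]
    _ = ENNReal.ofReal (2*K*c) * volume (ball (0:E) S) := by rw [hVol]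


set_option maxHeartbeats 1000000 in
/-- If `w₀` is essentially constant over dyadic intervals with constant `β` and `p > 1`,
then there is `N ∈ ℕ` depending only on `p` and `β` such that for all `n ≥ N` the radial
weight `w(x) = w₀(|x|)` is in `A_p(ℝⁿ)` with `A_p` constant at most
`max ((2·3ⁿ)ᵖ β²) β²`. -/
theorem stmt_8 (w₀ : ℝ → ℝ) (hw : ∀ r : ℝ, 0 < r → 0 < w₀ r)
    (β : ℝ) (hβ : 1 ≤ β)
    (hdyad : ∀ R : ℝ, 0 < R → ∀ s ∈ Set.Icc R (2 * R), ∀ t ∈ Set.Icc R (2 * R),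
      w₀ s ≤ β * w₀ t)
    (p : ℝ) (hp : 1 < p) :
    ∃ N : ℕ, ∀ n : ℕ, N ≤ n → ∀ (x : EuclideanSpace ℝ (Fin n)) (R : ℝ), 0 < R →
      ((volume (ball x R))⁻¹ * ∫⁻ y in ball x R, ENNReal.ofReal (w₀ ‖y‖)) *
        ((volume (ball x R))⁻¹ *
          ∫⁻ y in ball x R, ENNReal.ofReal (w₀ ‖y‖ ^ (1 / (1 - p)))) ^ (p - 1)
      ≤ ENNReal.ofReal (max ((2 * 3 ^ n) ^ p * β ^ 2) (β ^ 2)) := by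
  classical
  have hβ0 : (0:ℝ) < β := lt_of_lt_of_le one_pos hβ
  have hp1 : (0:ℝ) < p - 1 := by linarith
  set e : ℝ := 1/(1-p) with he
  have hee : e < 0 := by
    rw [he]
    apply div_neg_of_pos_of_neg one_pos
    linarith
  have heq : e * (p-1) = -1 := by
    rw [he, div_mul_eq_mul_div, div_eq_iff (by intro h; apply absurd h; intro h'; linarith : (1:ℝ)-p ≠ 0)]
    ring
  set K2 : ℝ := β ^ ((p-1)⁻¹) with hK2def
  have hK2 : 1 ≤ K2 := Real.one_le_rpow hβ (by positivity)
  have hK2pos : 0 < K2 := lt_of_lt_of_le one_pos hK2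
  -- choice of N
  set M : ℝ := max (max β K2) (β^2) with hM
  obtain ⟨N₀, hN₀⟩ := pow_unbounded_of_one_lt (2*M) (one_lt_two (α := ℝ))
  refine ⟨max N₀ 1, ?_⟩
  intro n hn x R hR
  have hn1 : 1 ≤ n := le_trans (le_max_right _ _) hn
  have h2M : 2*M ≤ 2^n := by
    calc 2*M ≤ 2^N₀ := hN₀.le
      _ ≤ 2^n := pow_le_pow_right₀ one_le_two (le_trans (le_max_left _ _) hn)
  have hMβ : β ≤ M := le_trans (le_max_left _ _) (le_max_left _ _)
  have hMK2 : K2 ≤ M := le_trans (le_max_right _ _) (le_max_left _ _)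
  have hMβ2 : β^2 ≤ M := le_max_right _ _
  have hKβ : 2*β ≤ 2^n := by nlinarith
  have hKK2 : 2*K2 ≤ 2^n := by nlinarith
  have h23 : (2:ℝ)^n ≤ 3^n := pow_le_pow_left₀ (by norm_num) (by norm_num) n
  have hβ23 : β^2 ≤ 2*3^n := by nlinarith
  have hfr : Module.finrank ℝ (EuclideanSpace ℝ (Fin n)) = n := finrank_euclideanSpace_fin
  set V := volume (ball x R) with hV
  have hV0 : V ≠ 0 := (measure_ball_pos volume x hR).ne'
  have hVt : V ≠ ⊤ := measure_ball_lt_top.ne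
  have havg : ∀ (I C : ℝ≥0∞), I ≤ C * V → V⁻¹ * I ≤ C := by
    intro I C h
    calc V⁻¹ * I ≤ V⁻¹ * (C * V) := mul_le_mul_right h _
      _ = C * (V⁻¹ * V) := by ring
      _ = C := by rw [ENNReal.inv_mul_cancel hV0 hVt, mul_one]
  have h3n1 : (1:ℝ) ≤ 3^n := one_le_pow₀ (by norm_num)
  have hx23 : (1:ℝ) ≤ 2 * 3^n := by linarith
  have hx0 : (0:ℝ) < 2 * 3^n := by positivity
  have h23p : (2:ℝ) * 3^n ≤ (2*3^n)^p := by
    calc (2:ℝ)*3^n = (2*3^n)^(1:ℝ) := (Real.rpow_one _).symm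
      _ ≤ (2*3^n)^p := Real.rpow_le_rpow_of_exponent_le hx23 hp.le
  by_cases hfar : 2*R ≤ ‖x‖
  · -- far case
    have hxn : (0:ℝ) < ‖x‖ := by linarith
    set a : ℝ := ‖x‖/2 with ha
    have ha0 : 0 < a := by positivity
    set c : ℝ := w₀ ‖x‖ with hc
    have hc0 : 0 < c := hw _ hxn
    have hmem : ∀ y ∈ ball x R, ‖y‖ ∈ Set.Icc a (4*a) := by
      intro y hy
      have hd : dist y x < R := mem_ball.1 hy
      have h1 : ‖x‖ - ‖y‖ ≤ dist y x := by
        rw [dist_eq_norm]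
        calc ‖x‖ - ‖y‖ ≤ ‖y - x‖ := by
              have := norm_sub_norm_le x y
              have h2 : ‖x - y‖ = ‖y - x‖ := norm_sub_rev x y
              linarith
          _ = ‖y - x‖ := rfl
      have h2 : ‖y‖ ≤ dist y x + ‖x‖ := by
        rw [dist_eq_norm]
        calc ‖y‖ = ‖y - x + x‖ := by simp
          _ ≤ ‖y - x‖ + ‖x‖ := norm_add_le _ _
      constructor
      · rw [ha]; linarith
      · rw [ha]; linarith
    have hxmem : ‖x‖ ∈ Set.Icc a (4*a) := by
      constructor
      · rw [ha]; linarith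
      · rw [ha]; linarith
    have havg1 : V⁻¹ * (∫⁻ y in ball x R, ENNReal.ofReal (w₀ ‖y‖))
        ≤ ENNReal.ofReal (β^2*c) := by
      apply havg
      calc (∫⁻ y in ball x R, ENNReal.ofReal (w₀ ‖y‖))
          ≤ ∫⁻ _ in ball x R, ENNReal.ofReal (β^2*c) := by
            refine setLIntegral_mono' measurableSet_ball (fun y hy => ?_)
            exact ENNReal.ofReal_le_ofReal
              (aux_four w₀ β hβ hdyad hw a ha0 (hmem y hy) hxmem)
        _ = ENNReal.ofReal (β^2*c) * V := setLIntegral_const _ _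
    set d : ℝ := (c/β^2) ^ e with hd
    have hcb : 0 < c/β^2 := by positivity
    have hd0 : 0 < d := Real.rpow_pos_of_pos hcb e
    have havg2 : V⁻¹ * (∫⁻ y in ball x R, ENNReal.ofReal (w₀ ‖y‖ ^ e))
        ≤ ENNReal.ofReal d := by
      apply havg
      calc (∫⁻ y in ball x R, ENNReal.ofReal (w₀ ‖y‖ ^ e))
          ≤ ∫⁻ _ in ball x R, ENNReal.ofReal d := by
            refine setLIntegral_mono' measurableSet_ball (fun y hy => ?_)
            apply ENNReal.ofReal_le_ofReal
            have hlow : c/β^2 ≤ w₀ ‖y‖ := by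
              rw [div_le_iff₀ (by positivity)]
              have := aux_four w₀ β hβ hdyad hw a ha0 hxmem (hmem y hy)
              nlinarith
            rw [hd]
            exact Real.rpow_le_rpow_of_nonpos hcb hlow hee.le
        _ = ENNReal.ofReal d * V := setLIntegral_const _ _
    have hdp : d ^ (p-1) = β^2/c := by
      rw [hd, ← Real.rpow_mul hcb.le, heq, Real.rpow_neg_one]
      rw [inv_div]
    calc (V⁻¹ * ∫⁻ y in ball x R, ENNReal.ofReal (w₀ ‖y‖)) *
        (V⁻¹ * ∫⁻ y in ball x R, ENNReal.ofReal (w₀ ‖y‖ ^ e)) ^ (p-1)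
        ≤ ENNReal.ofReal (β^2*c) * (ENNReal.ofReal d) ^ (p-1) :=
          mul_le_mul' havg1 (ENNReal.rpow_le_rpow havg2 hp1.le)
      _ = ENNReal.ofReal (β^2*c * (β^2/c)) := by
          rw [ENNReal.ofReal_rpow_of_pos hd0, hdp,
            ← ENNReal.ofReal_mul (by positivity)]
      _ ≤ ENNReal.ofReal (max ((2 * 3 ^ n) ^ p * β ^ 2) (β ^ 2)) := by
          apply ENNReal.ofReal_le_ofReal
          refine le_trans ?_ (le_max_left _ _)
          have hid : β^2*c*(β^2/c) = β^2*β^2 := by field_simp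
          rw [hid]
          calc β^2*β^2 ≤ (2*3^n)*β^2 := by nlinarith
            _ ≤ (2*3^n)^p * β^2 := by nlinarith
  · -- near case
    push_neg at hfar
    set S : ℝ := 3*R with hSdef
    have hS : 0 < S := by positivity
    have hsub : ball x R ⊆ ball (0 : EuclideanSpace ℝ (Fin n)) S := by
      intro y hy
      rw [mem_ball_zero_iff]
      have hd : dist y x < R := mem_ball.1 hy
      have h2 : ‖y‖ ≤ dist y x + ‖x‖ := by
        rw [dist_eq_norm]
        calc ‖y‖ = ‖y - x + x‖ := by simp
          _ ≤ ‖y - x‖ + ‖x‖ := norm_add_le _ _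
      rw [hSdef]; linarith
    have hvol3 : volume (ball (0 : EuclideanSpace ℝ (Fin n)) S) = ENNReal.ofReal ((3:ℝ)^n) * V := by
      rw [hV, Measure.addHaar_ball_of_pos (volume : Measure (EuclideanSpace ℝ (Fin n))) (0 : EuclideanSpace ℝ (Fin n)) hS,
        Measure.addHaar_ball_of_pos (volume : Measure (EuclideanSpace ℝ (Fin n))) x hR, hfr, hSdef,
        mul_pow, ENNReal.ofReal_mul (by positivity), mul_assoc]
    set c : ℝ := w₀ (S/2) with hc
    have hc0 : 0 < c := hw _ (by positivity)
    set c₂ : ℝ := c ^ e with hc2def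
    have hc20 : 0 < c₂ := Real.rpow_pos_of_pos hc0 e
    -- first annuli bound
    have hA1 := annuli_bound n hn1 w₀ S c β hS hc0.le hβ
      (fun k t h1 h2 => (aux_dyadic w₀ β hβ hdyad S hS k t h1 h2).1) hKβ
    -- second annuli bound
    have hbound2 : ∀ (k : ℕ) (t : ℝ), S/2^(k+1) ≤ t → t ≤ S/2^k →
        w₀ t ^ e ≤ K2^(k+1) * c₂ := by
      intro k t h1 h2
      have ht0 : 0 < t := lt_of_lt_of_le (by positivity) h1
      have hwt : 0 < w₀ t := hw t ht0
      have hcb : c ≤ β^(k+1) * w₀ t := (aux_dyadic w₀ β hβ hdyad S hS k t h1 h2).2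
      have h3 : c / β^(k+1) ≤ w₀ t := by
        rw [div_le_iff₀ (by positivity)]
        nlinarith
      have h4 : w₀ t ^ e ≤ (c / β^(k+1)) ^ e :=
        Real.rpow_le_rpow_of_nonpos (by positivity) h3 hee.le
      have h6 : ((β:ℝ)^(k+1) : ℝ) ^ e = (K2 ^ (k+1))⁻¹ := by
        rw [← Real.rpow_natCast β (k+1), ← Real.rpow_mul hβ0.le,
          ← Real.rpow_natCast K2 (k+1), hK2def, ← Real.rpow_mul hβ0.le,
          ← Real.rpow_neg hβ0.le]
        congr 1
        have h1p : (1:ℝ) - p ≠ 0 := sub_ne_zero.2 (by linarith)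
        push_cast
        rw [he]
        field_simp
        ring
      calc w₀ t ^ e ≤ (c / β^(k+1)) ^ e := h4
        _ = c ^ e / (β^(k+1)) ^ e := Real.div_rpow hc0.le (by positivity) e
        _ = c ^ e / (K2 ^ (k+1))⁻¹ := by rw [h6]
        _ = K2^(k+1) * c₂ := by rw [div_eq_mul_inv, inv_inv, hc2def]; ring
    have hA2 := annuli_bound n hn1 (fun t => w₀ t ^ e) S c₂ K2 hS hc20.le hK2
      hbound2 hKK2
    -- averages
    have havg1 : V⁻¹ * (∫⁻ y in ball x R, ENNReal.ofReal (w₀ ‖y‖))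
        ≤ ENNReal.ofReal (2*β*c*3^n) := by
      apply havg
      calc (∫⁻ y in ball x R, ENNReal.ofReal (w₀ ‖y‖))
          ≤ ∫⁻ y in ball (0 : EuclideanSpace ℝ (Fin n)) S, ENNReal.ofReal (w₀ ‖y‖) := lintegral_mono_set hsub
        _ ≤ ENNReal.ofReal (2*β*c) * volume (ball (0 : EuclideanSpace ℝ (Fin n)) S) := hA1
        _ = ENNReal.ofReal (2*β*c*3^n) * V := by
            rw [hvol3, ← mul_assoc, ← ENNReal.ofReal_mul (by positivity)]
    have havg2 : V⁻¹ * (∫⁻ y in ball x R, ENNReal.ofReal (w₀ ‖y‖ ^ e))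
        ≤ ENNReal.ofReal (2*K2*c₂*3^n) := by
      apply havg
      calc (∫⁻ y in ball x R, ENNReal.ofReal (w₀ ‖y‖ ^ e))
          ≤ ∫⁻ y in ball (0 : EuclideanSpace ℝ (Fin n)) S, ENNReal.ofReal (w₀ ‖y‖ ^ e) :=
            lintegral_mono_set hsub
        _ ≤ ENNReal.ofReal (2*K2*c₂) * volume (ball (0 : EuclideanSpace ℝ (Fin n)) S) := hA2
        _ = ENNReal.ofReal (2*K2*c₂*3^n) * V := by
            rw [hvol3, ← mul_assoc, ← ENNReal.ofReal_mul (by positivity)]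
    -- real computation
    have hK2p : K2 ^ (p-1) = β := by
      rw [hK2def, ← Real.rpow_mul hβ0.le, inv_mul_cancel₀ (ne_of_gt hp1),
        Real.rpow_one]
    have hc2p : c₂ ^ (p-1) = c⁻¹ := by
      rw [hc2def, ← Real.rpow_mul hc0.le, heq, Real.rpow_neg_one]
    have hxp : ((2:ℝ)*3^n) ^ p = (2*3^n) * (2*3^n)^(p-1) := by
      nth_rewrite 1 [show p = 1 + (p-1) by ring]
      rw [Real.rpow_add hx0, Real.rpow_one]
    have hsplit : ((2:ℝ)*K2*c₂*3^n)^(p-1) = (2*3^n)^(p-1) * (K2^(p-1) * c₂^(p-1)) := by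
      rw [show (2*K2*c₂*3^n : ℝ) = (2*3^n)*(K2*c₂) by ring,
        Real.mul_rpow hx0.le (by positivity),
        Real.mul_rpow hK2pos.le hc20.le]
    have hreal : 2*β*c*3^n * (2*K2*c₂*3^n)^(p-1) = (2*3^n)^p * β^2 := by
      rw [hsplit, hK2p, hc2p, hxp]
      field_simp
    calc (V⁻¹ * ∫⁻ y in ball x R, ENNReal.ofReal (w₀ ‖y‖)) *
        (V⁻¹ * ∫⁻ y in ball x R, ENNReal.ofReal (w₀ ‖y‖ ^ e)) ^ (p-1)
        ≤ ENNReal.ofReal (2*β*c*3^n) * (ENNReal.ofReal (2*K2*c₂*3^n)) ^ (p-1) :=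
          mul_le_mul' havg1 (ENNReal.rpow_le_rpow havg2 hp1.le)
      _ = ENNReal.ofReal (2*β*c*3^n * (2*K2*c₂*3^n)^(p-1)) := by
          rw [ENNReal.ofReal_rpow_of_pos (by positivity),
            ← ENNReal.ofReal_mul (by positivity)]
      _ = ENNReal.ofReal ((2*3^n)^p * β^2) := by rw [hreal]
      _ ≤ ENNReal.ofReal (max ((2 * 3 ^ n) ^ p * β ^ 2) (β ^ 2)) :=
          ENNReal.ofReal_le_ofReal (le_max_left _ _)
end

section
/- Let w₀ : (0,∞) → (0,∞) be essentially constant over dyadic intervals with constant β. Then the radial measure dμ = w₀(|x|)dx on ℝⁿ is uniformly n-micro-doubling for all sufficiently large n: there exist N and K depending only on β so that for n ≥ N, all x ∈ ℝⁿ and R > 0, μ(B(x,(1+1/n)R)) ≤ K μ(B(x,R)). -/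
/-!
Split `B(x, (1 + δ)R)`, `δ = 1/n`, into the part inside `B(0, 2δR)` and the rest.

On the rest, the homothety of ratio `(1 + δ)⁻¹` about `x` maps into `B(x, R)` and moves each
point `z` by at most `δR ≤ |z|/2`, so it changes the weight by at most `β⁴`; its Jacobian
`(1 + δ)ⁿ` is at most `e`.

The part near the origin matters only when `|x| ≤ 2R`; it then lies in `B(0, R)`. Once
`2β ≤ 2ⁿ`, the dyadic shells of `B(0, R)` carry geometrically decreasing mass, so
`μ(B(0, R)) ≤ 2β w₀(R) |B(0, R)|`. Conversely, removing `B(0, R/2)` leaves at least half the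
volume of `B(x, R)`, at points of norm comparable to `R`, so
`w₀(R) |B(0, R)| ≲ β⁶ μ(B(x, R))`.
-/

open MeasureTheory Metric Set Module
open scoped ENNReal

def EssentiallyConstantOnDyadics (w : ℝ → ℝ) (β : ℝ) : Prop :=
  ∀ R : ℝ, 0 < R → ∀ s ∈ Icc R (2 * R), ∀ t ∈ Icc R (2 * R), w s ≤ β * w t

namespace EssentiallyConstantOnDyadics

variable {w : ℝ → ℝ} {β : ℝ}

theorem le_pow_mul_of_le_two_pow_mul (h : EssentiallyConstantOnDyadics w β) (hβ : 1 ≤ β)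
    (hw : ∀ r, 0 < r → 0 ≤ w r) (k : ℕ) {s t : ℝ} (hs : 0 < s) (hst : s ≤ t)
    (hts : t ≤ 2 ^ k * s) : w t ≤ β ^ k * w s ∧ w s ≤ β ^ k * w t := by
  induction k generalizing t with
  | zero =>
    obtain rfl : t = s := le_antisymm (by simpa using hts) hst
    simp
  | succ k ih =>
    have hβk : β ^ k ≤ β ^ (k + 1) := pow_le_pow_right₀ hβ k.le_succ
    by_cases hkt : t ≤ 2 ^ k * s
    · obtain ⟨h₁, h₂⟩ := ih hst hkt
      exact ⟨h₁.trans (by gcongr; exact hw s hs),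
        h₂.trans (by gcongr; exact hw t (hs.trans_le hst))⟩
    · push Not at hkt
      set m := 2 ^ k * s
      have hm : 0 < m := by positivity
      have hsm : s ≤ m := le_mul_of_one_le_left hs.le (one_le_pow₀ one_le_two)
      have ht : t ∈ Icc m (2 * m) := ⟨hkt.le, by rw [pow_succ] at hts; linarith⟩
      have hm' : m ∈ Icc m (2 * m) := ⟨le_rfl, by linarith⟩
      obtain ⟨h₁, h₂⟩ := ih hsm le_rfl
      have hβ0 : 0 ≤ β := zero_le_one.trans hβ
      constructor
      · calc w t ≤ β * w m := h m hm t ht m hm'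
          _ ≤ β * (β ^ k * w s) := by gcongr
          _ = β ^ (k + 1) * w s := by ring
      · calc w s ≤ β ^ k * w m := h₂
          _ ≤ β ^ k * (β * w t) := by gcongr; exact h m hm m hm' t ht
          _ = β ^ (k + 1) * w t := by ring

theorem le_pow_mul_of_mem_Icc (h : EssentiallyConstantOnDyadics w β) (hβ : 1 ≤ β)
    (hw : ∀ r, 0 < r → 0 ≤ w r) (k : ℕ) {a s t : ℝ} (ha : 0 < a)
    (hs : s ∈ Icc a (2 ^ k * a)) (ht : t ∈ Icc a (2 ^ k * a)) :
    w s ≤ β ^ (2 * k) * w t :=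
  calc w s ≤ β ^ k * w a := (h.le_pow_mul_of_le_two_pow_mul hβ hw k ha hs.1 hs.2).1
    _ ≤ β ^ k * (β ^ k * w t) := by
        gcongr
        exact (h.le_pow_mul_of_le_two_pow_mul hβ hw k ha ht.1 ht.2).2
    _ = β ^ (2 * k) * w t := by ring

theorem le_pow_four_mul_of_abs_sub_le (h : EssentiallyConstantOnDyadics w β) (hβ : 1 ≤ β)
    (hw : ∀ r, 0 < r → 0 ≤ w r) {s t : ℝ} (hs : 0 < s) (hst : |s - t| ≤ s / 2) :
    w s ≤ β ^ 4 * w t := by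
  have := abs_le.mp hst
  exact h.le_pow_mul_of_mem_Icc hβ hw 2 (a := s / 2) (by positivity)
    ⟨by linarith, by linarith⟩ ⟨by linarith, by linarith⟩

end EssentiallyConstantOnDyadics

section Homothety

variable {E : Type*} [NormedAddCommGroup E] [NormedSpace ℝ E] {x z : E} {δ R : ℝ}

theorem homothety_inv_one_add_mem_ball (hδ : 0 ≤ δ) (hz : z ∈ ball x ((1 + δ) * R)) :
    AffineMap.homothety x (1 + δ)⁻¹ z ∈ ball x R := by
  rw [mem_ball, dist_homothety_center, dist_comm, Real.norm_of_nonneg (by positivity),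
    inv_mul_lt_iff₀ (by positivity)]
  exact hz

theorem dist_homothety_inv_one_add_le (hδ : 0 ≤ δ) (hz : z ∈ ball x ((1 + δ) * R)) :
    dist (AffineMap.homothety x (1 + δ)⁻¹ z) z ≤ δ * R := by
  have h1δ : 0 < 1 + δ := by linarith
  have hc : 1 - (1 + δ)⁻¹ = δ / (1 + δ) := by field_simp; ring
  rw [dist_homothety_self, hc, Real.norm_of_nonneg (by positivity), dist_comm]
  calc δ / (1 + δ) * dist z x ≤ δ / (1 + δ) * ((1 + δ) * R) := by
        gcongr; exact (mem_ball.mp hz).le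
    _ = δ * R := by field_simp

end Homothety

section DyadicShell

variable {E : Type*} [NormedAddCommGroup E] {R : ℝ}

def dyadicShell (R : ℝ) (j : ℕ) : Set E :=
  closedBall 0 (2⁻¹ ^ j * R) \ closedBall 0 (2⁻¹ ^ (j + 1) * R)

theorem ball_zero_subset_union_dyadicShell : ball (0 : E) R ⊆ {0} ∪ ⋃ j, dyadicShell R j := by
  intro y hy
  rcases eq_or_ne y 0 with rfl | hy0
  · exact Or.inl rfl
  have hy₀ : 0 < ‖y‖ := norm_pos_iff.mpr hy0
  obtain ⟨j, hj₁, hj₂⟩ :=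
    exists_nat_pow_near ((one_le_div hy₀).mpr (mem_ball_zero_iff.mp hy).le) one_lt_two
  rw [le_div_iff₀ hy₀] at hj₁
  rw [div_lt_iff₀ hy₀] at hj₂
  refine Or.inr (mem_iUnion.mpr ⟨j, ?_, ?_⟩) <;>
    simp only [mem_closedBall_zero_iff, not_le, inv_pow, inv_mul_eq_div]
  · rwa [le_div_iff₀ (by positivity), mul_comm]
  · rwa [div_lt_iff₀ (by positivity), mul_comm]

end DyadicShell

section RadialMeasure

variable {E : Type*} [Norm E] [MeasurableSpace E] (μ : Measure E) [SFinite μ] {w : ℝ → ℝ}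

noncomputable def radialMeasure (μ : Measure E) (w : ℝ → ℝ) : Measure E :=
  μ.withDensity fun y => ENNReal.ofReal (w ‖y‖)

theorem radialMeasure_apply (w : ℝ → ℝ) (s : Set E) :
    radialMeasure μ w s = ∫⁻ y in s, ENNReal.ofReal (w ‖y‖) ∂μ :=
  withDensity_apply' _ s

theorem radialMeasure_le_mul_measure {s : Set E} (hs : MeasurableSet s) {C : ℝ}
    (h : ∀ y ∈ s, w ‖y‖ ≤ C) : radialMeasure μ w s ≤ ENNReal.ofReal C * μ s := by
  rw [radialMeasure_apply, ← setLIntegral_const]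
  exact setLIntegral_mono' hs fun y hy => ENNReal.ofReal_le_ofReal (h y hy)

theorem mul_measure_le_radialMeasure {s : Set E} (hs : MeasurableSet s) {C c : ℝ} (hc : 0 ≤ c)
    (h : ∀ y ∈ s, C ≤ c * w ‖y‖) :
    ENNReal.ofReal C * μ s ≤ ENNReal.ofReal c * radialMeasure μ w s := by
  rw [radialMeasure_apply, ← setLIntegral_const,
    ← lintegral_const_mul' _ _ ENNReal.ofReal_ne_top]
  refine setLIntegral_mono' hs fun y hy => ?_
  rw [← ENNReal.ofReal_mul hc]
  exact ENNReal.ofReal_le_ofReal (h y hy)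

end RadialMeasure

section Haar

variable {E : Type*} [NormedAddCommGroup E] [NormedSpace ℝ E] [MeasurableSpace E] [BorelSpace E]
  [FiniteDimensional ℝ E] (μ : Measure E) [μ.IsAddHaarMeasure]

theorem lintegral_comp_homothety (f : E → ℝ≥0∞) (x : E) {c : ℝ} (hc : 0 < c) :
    ∫⁻ z, f (AffineMap.homothety x c z) ∂μ
      = ENNReal.ofReal ((c ^ finrank ℝ E)⁻¹) * ∫⁻ y, f y ∂μ := by
  simp only [AffineMap.homothety_apply, vsub_eq_sub, vadd_eq_add]
  have := lintegral_map_equiv (μ := μ) (fun y => f (y + x)) (MeasurableEquiv.smul₀ c hc.ne')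
  simp only [MeasurableEquiv.coe_smul₀] at this
  rw [lintegral_sub_right_eq_self (fun z => f (c • z + x)) x, ← this,
    Measure.map_addHaar_smul μ hc.ne', lintegral_smul_measure,
    lintegral_add_right_eq_self (fun y => f y) x,
    abs_of_pos (by positivity), smul_eq_mul]

theorem measure_ball_le_two_mul_measure_ball_diff [Nontrivial E] (x y : E) (r : ℝ) :
    μ (ball x r) ≤ 2 * μ (ball x r \ ball y (r / 2)) := by
  rcases le_or_gt r 0 with hr | hr
  · simp [ball_eq_empty.mpr hr]
  have hsmall : μ (ball y (r / 2)) ≤ μ (ball x r) / 2 := by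
    rw [Measure.addHaar_ball_center μ y, Measure.addHaar_ball_center μ x, div_eq_inv_mul r,
      Measure.addHaar_ball_mul_of_pos μ 0 (by norm_num), ENNReal.div_eq_inv_mul]
    gcongr
    calc ENNReal.ofReal (2⁻¹ ^ finrank ℝ E) ≤ ENNReal.ofReal (2⁻¹ ^ 1) :=
          ENNReal.ofReal_le_ofReal (pow_le_pow_of_le_one (by norm_num) (by norm_num) finrank_pos)
      _ = 2⁻¹ := by rw [pow_one, ENNReal.ofReal_inv_of_pos two_pos, ENNReal.ofReal_ofNat]
  have hsplit : μ (ball x r) ≤ μ (ball x r \ ball y (r / 2)) + μ (ball x r) / 2 :=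
    (measure_mono (subset_sdiff_union _ _)).trans ((measure_union_le _ _).trans (by gcongr))
  have hhalf : μ (ball x r) / 2 ≤ μ (ball x r \ ball y (r / 2)) := by
    rw [← ENNReal.sub_half measure_ball_lt_top.ne]
    exact tsub_le_iff_right.mpr hsplit
  calc μ (ball x r) = 2 * (μ (ball x r) / 2) :=
        (ENNReal.mul_div_cancel two_ne_zero ENNReal.ofNat_ne_top).symm
    _ ≤ 2 * μ (ball x r \ ball y (r / 2)) := by gcongr

section Dyadic

variable {w : ℝ → ℝ} {β : ℝ} (h : EssentiallyConstantOnDyadics w β) (hβ : 1 ≤ β)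
  (hw : ∀ r, 0 < r → 0 ≤ w r)
include h hβ hw

theorem radialMeasure_dyadicShell_le [Nontrivial E] (hd : 2 * β ≤ 2 ^ finrank ℝ E) {R : ℝ}
    (hR : 0 < R) (j : ℕ) :
    radialMeasure μ w (dyadicShell R j)
      ≤ ENNReal.ofReal (β * w R * 2⁻¹ ^ j) * μ (ball 0 R) := by
  have hβ0 : 0 ≤ β := zero_le_one.trans hβ
  have hwR : 0 ≤ w R := hw R hR
  have hpt : ∀ y ∈ (dyadicShell R j : Set E), w ‖y‖ ≤ β ^ (j + 1) * w R := by
    rintro y ⟨hy₁, hy₂⟩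
    rw [mem_closedBall_zero_iff] at hy₁ hy₂
    rw [not_le, inv_pow, inv_mul_eq_div, div_lt_iff₀ (by positivity)] at hy₂
    have hyR : ‖y‖ ≤ R :=
      hy₁.trans (mul_le_of_le_one_left hR.le (pow_le_one₀ (by norm_num) (by norm_num)))
    refine (h.le_pow_mul_of_le_two_pow_mul hβ hw (j + 1) ?_ hyR (by linarith)).2
    exact pos_of_mul_pos_left (hR.trans hy₂) (by positivity)
  have hvol :
      μ (dyadicShell R j) ≤ ENNReal.ofReal ((2⁻¹ ^ j) ^ finrank ℝ E) * μ (ball 0 R) := by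
    rw [← Measure.addHaar_closedBall_eq_addHaar_ball,
      ← Measure.addHaar_closedBall_mul_of_pos μ 0 (by positivity)]
    exact measure_mono sdiff_subset
  have hreal : β ^ (j + 1) * w R * (2⁻¹ ^ j) ^ finrank ℝ E ≤ β * w R * 2⁻¹ ^ j := by
    have hq : β * 2⁻¹ ^ finrank ℝ E ≤ 2⁻¹ := by
      rw [inv_pow, ← div_eq_mul_inv, div_le_iff₀ (by positivity)]
      linarith
    calc β ^ (j + 1) * w R * (2⁻¹ ^ j) ^ finrank ℝ E
        = β * w R * (β * 2⁻¹ ^ finrank ℝ E) ^ j := by ring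
      _ ≤ β * w R * 2⁻¹ ^ j := by gcongr
  calc radialMeasure μ w (dyadicShell R j)
      ≤ ENNReal.ofReal (β ^ (j + 1) * w R) * μ (dyadicShell R j) :=
        radialMeasure_le_mul_measure μ
          (measurableSet_closedBall.diff measurableSet_closedBall) hpt
    _ ≤ ENNReal.ofReal (β ^ (j + 1) * w R)
          * (ENNReal.ofReal ((2⁻¹ ^ j) ^ finrank ℝ E) * μ (ball 0 R)) := by
        gcongr
    _ = ENNReal.ofReal (β ^ (j + 1) * w R * (2⁻¹ ^ j) ^ finrank ℝ E) * μ (ball 0 R) := by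
        rw [← mul_assoc, ← ENNReal.ofReal_mul (by positivity)]
    _ ≤ ENNReal.ofReal (β * w R * 2⁻¹ ^ j) * μ (ball 0 R) := by gcongr

theorem radialMeasure_ball_zero_le [Nontrivial E] (hd : 2 * β ≤ 2 ^ finrank ℝ E) {R : ℝ}
    (hR : 0 < R) :
    radialMeasure μ w (ball 0 R) ≤ ENNReal.ofReal (2 * β * w R) * μ (ball 0 R) := by
  have hβ0 : 0 ≤ β := zero_le_one.trans hβ
  have hwR : 0 ≤ w R := hw R hR
  have hzero : radialMeasure μ w {0} = 0 :=
    withDensity_absolutelyContinuous μ _ (measure_singleton 0)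
  calc radialMeasure μ w (ball 0 R) ≤ radialMeasure μ w ({0} ∪ ⋃ j, dyadicShell R j) :=
        measure_mono ball_zero_subset_union_dyadicShell
    _ ≤ ∑' j, radialMeasure μ w (dyadicShell R j) := by
        refine (measure_union_le _ _).trans ?_
        rw [hzero, zero_add]
        exact measure_iUnion_le _
    _ ≤ ∑' j, ENNReal.ofReal (β * w R * 2⁻¹ ^ j) * μ (ball 0 R) :=
        ENNReal.tsum_le_tsum (radialMeasure_dyadicShell_le μ h hβ hw hd hR)
    _ = ∑' j : ℕ, ENNReal.ofReal (β * w R) * μ (ball 0 R) * 2⁻¹ ^ j := by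
        congr 1 with j
        rw [ENNReal.ofReal_mul (by positivity), ENNReal.ofReal_pow (by norm_num),
          ENNReal.ofReal_inv_of_pos two_pos, ENNReal.ofReal_ofNat]
        ring
    _ = ENNReal.ofReal (2 * β * w R) * μ (ball 0 R) := by
        rw [ENNReal.tsum_mul_left, ENNReal.tsum_geometric, ENNReal.one_sub_inv_two, inv_inv,
          mul_assoc 2 β, ENNReal.ofReal_mul zero_le_two, ENNReal.ofReal_ofNat]
        ring

theorem mul_measure_ball_zero_le_radialMeasure [Nontrivial E] {x : E} {R : ℝ} (hR : 0 < R)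
    (hx : ‖x‖ ≤ 2 * R) :
    ENNReal.ofReal (w R) * μ (ball 0 R)
      ≤ ENNReal.ofReal (2 * β ^ 6) * radialMeasure μ w (ball x R) := by
  set D := ball x R \ ball 0 (R / 2)
  have hpt : ∀ y ∈ D, w R ≤ β ^ 6 * w ‖y‖ := by
    rintro y ⟨hy₁, hy₂⟩
    rw [mem_ball_iff_norm] at hy₁
    rw [mem_ball_zero_iff, not_lt] at hy₂
    have := norm_le_norm_add_norm_sub' y x
    exact h.le_pow_mul_of_mem_Icc hβ hw 3 (a := R / 2) (by positivity)
      ⟨by linarith, by linarith⟩ ⟨hy₂, by linarith⟩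
  calc ENNReal.ofReal (w R) * μ (ball 0 R) = ENNReal.ofReal (w R) * μ (ball x R) := by
        rw [Measure.addHaar_ball_center μ x]
    _ ≤ ENNReal.ofReal (w R) * (2 * μ D) := by
        gcongr; exact measure_ball_le_two_mul_measure_ball_diff μ x 0 R
    _ = 2 * (ENNReal.ofReal (w R) * μ D) := by ring
    _ ≤ 2 * (ENNReal.ofReal (β ^ 6) * radialMeasure μ w D) := by
        gcongr 2 * ?_
        exact mul_measure_le_radialMeasure μ (measurableSet_ball.diff measurableSet_ball)
          (by positivity) hpt
    _ ≤ 2 * (ENNReal.ofReal (β ^ 6) * radialMeasure μ w (ball x R)) := by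
        gcongr; exact sdiff_subset
    _ = ENNReal.ofReal (2 * β ^ 6) * radialMeasure μ w (ball x R) := by
        rw [ENNReal.ofReal_mul zero_le_two, ENNReal.ofReal_ofNat, mul_assoc]

theorem radialMeasure_ball_diff_ball_le (x : E) {δ R : ℝ} (hδ : 0 < δ) :
    radialMeasure μ w (ball x ((1 + δ) * R) \ ball 0 (2 * δ * R))
      ≤ ENNReal.ofReal (β ^ 4 * (1 + δ) ^ finrank ℝ E) * radialMeasure μ w (ball x R) := by
  set φ := AffineMap.homothety x (1 + δ)⁻¹
  set g : E → ℝ≥0∞ := fun y => ENNReal.ofReal (w ‖y‖)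
  have key : ∀ z ∈ ball x ((1 + δ) * R) \ ball 0 (2 * δ * R),
      g z ≤ ENNReal.ofReal (β ^ 4) * (ball x R).indicator g (φ z) := by
    rintro z ⟨hz₁, hz₂⟩
    rw [mem_ball_zero_iff, not_lt] at hz₂
    have hR : 0 < R := pos_of_mul_pos_right (dist_nonneg.trans_lt hz₁) (by linarith)
    have hdist := dist_homothety_inv_one_add_le hδ.le hz₁
    have hnorm : |‖z‖ - ‖φ z‖| ≤ ‖z‖ / 2 :=
      (abs_norm_sub_norm_le z (φ z)).trans (by rw [← dist_eq_norm, dist_comm]; linarith)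
    rw [indicator_of_mem (homothety_inv_one_add_mem_ball hδ.le hz₁),
      ← ENNReal.ofReal_mul (by positivity)]
    exact ENNReal.ofReal_le_ofReal
      (h.le_pow_four_mul_of_abs_sub_le hβ hw (by nlinarith) hnorm)
  calc radialMeasure μ w (ball x ((1 + δ) * R) \ ball 0 (2 * δ * R))
      ≤ ∫⁻ z in ball x ((1 + δ) * R) \ ball 0 (2 * δ * R),
          ENNReal.ofReal (β ^ 4) * (ball x R).indicator g (φ z) ∂μ := by
        rw [radialMeasure_apply]
        exact setLIntegral_mono' (measurableSet_ball.diff measurableSet_ball) key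
    _ ≤ ∫⁻ z, ENNReal.ofReal (β ^ 4) * (ball x R).indicator g (φ z) ∂μ :=
        setLIntegral_le_lintegral _ _
    _ = ENNReal.ofReal (β ^ 4)
          * (ENNReal.ofReal ((1 + δ) ^ finrank ℝ E) * radialMeasure μ w (ball x R)) := by
        rw [lintegral_const_mul' _ _ ENNReal.ofReal_ne_top,
          lintegral_comp_homothety μ ((ball x R).indicator g) x (by positivity),
          lintegral_indicator measurableSet_ball, radialMeasure_apply, inv_pow, inv_inv]
    _ = ENNReal.ofReal (β ^ 4 * (1 + δ) ^ finrank ℝ E) * radialMeasure μ w (ball x R) := by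
        rw [← mul_assoc, ← ENNReal.ofReal_mul (by positivity)]

theorem radialMeasure_ball_inter_ball_le [Nontrivial E] (hd : 2 * β ≤ 2 ^ finrank ℝ E) (x : E)
    {δ R : ℝ} (hδ : 3 * δ ≤ 1) (hR : 0 < R) :
    radialMeasure μ w (ball x ((1 + δ) * R) ∩ ball 0 (2 * δ * R))
      ≤ ENNReal.ofReal (4 * β ^ 7) * radialMeasure μ w (ball x R) := by
  rcases le_or_gt ‖x‖ (2 * R) with hx | hx
  · have hsub : ball x ((1 + δ) * R) ∩ ball 0 (2 * δ * R) ⊆ ball 0 R :=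
      inter_subset_right.trans (ball_subset_ball (by nlinarith))
    have hβ0 : 0 ≤ β := zero_le_one.trans hβ
    calc radialMeasure μ w (ball x ((1 + δ) * R) ∩ ball 0 (2 * δ * R))
        ≤ radialMeasure μ w (ball 0 R) := measure_mono hsub
      _ ≤ ENNReal.ofReal (2 * β * w R) * μ (ball 0 R) :=
          radialMeasure_ball_zero_le μ h hβ hw hd hR
      _ = ENNReal.ofReal (2 * β) * (ENNReal.ofReal (w R) * μ (ball 0 R)) := by
          rw [← mul_assoc, ← ENNReal.ofReal_mul (by positivity)]
      _ ≤ ENNReal.ofReal (2 * β)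
            * (ENNReal.ofReal (2 * β ^ 6) * radialMeasure μ w (ball x R)) := by
          gcongr ENNReal.ofReal (2 * β) * ?_
          exact mul_measure_ball_zero_le_radialMeasure μ h hβ hw hR hx
      _ = ENNReal.ofReal (4 * β ^ 7) * radialMeasure μ w (ball x R) := by
          rw [← mul_assoc, ← ENNReal.ofReal_mul (by positivity)]; ring_nf
  · have hempty : ball x ((1 + δ) * R) ∩ ball 0 (2 * δ * R) = ∅ := by
      refine eq_empty_of_forall_notMem fun y ⟨hy₁, hy₂⟩ => ?_
      rw [mem_ball_iff_norm] at hy₁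
      rw [mem_ball_zero_iff] at hy₂
      have := norm_le_norm_add_norm_sub y x
      nlinarith
    simp [hempty]

theorem radialMeasure_ball_one_add_mul_le [Nontrivial E] (hd : 2 * β ≤ 2 ^ finrank ℝ E) (x : E)
    {δ R : ℝ} (hδ₀ : 0 < δ) (hδ : 3 * δ ≤ 1) (hR : 0 < R) :
    radialMeasure μ w (ball x ((1 + δ) * R))
      ≤ ENNReal.ofReal (4 * β ^ 7 + β ^ 4 * (1 + δ) ^ finrank ℝ E)
          * radialMeasure μ w (ball x R) := by
  have hβ0 : 0 ≤ β := zero_le_one.trans hβ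
  calc radialMeasure μ w (ball x ((1 + δ) * R))
      ≤ radialMeasure μ w (ball x ((1 + δ) * R) ∩ ball 0 (2 * δ * R))
        + radialMeasure μ w (ball x ((1 + δ) * R) \ ball 0 (2 * δ * R)) :=
        measure_le_inter_add_sdiff _ _ _
    _ ≤ ENNReal.ofReal (4 * β ^ 7) * radialMeasure μ w (ball x R)
        + ENNReal.ofReal (β ^ 4 * (1 + δ) ^ finrank ℝ E) * radialMeasure μ w (ball x R) :=
        add_le_add (radialMeasure_ball_inter_ball_le μ h hβ hw hd x hδ hR)
          (radialMeasure_ball_diff_ball_le μ h hβ hw x hδ₀)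
    _ = ENNReal.ofReal (4 * β ^ 7 + β ^ 4 * (1 + δ) ^ finrank ℝ E)
          * radialMeasure μ w (ball x R) := by
        rw [ENNReal.ofReal_add (by positivity) (by positivity), add_mul]

end Dyadic

end Haar

/-- If `w₀ : (0,∞) → (0,∞)` is essentially constant over dyadic intervals with constant
`β`, then the radial measures `dμ = w₀(|x|)dx` are uniformly `n`-micro-doubling for all
sufficiently large `n`: there exist `N` and `K` (depending only on `β`) such that for all
`n ≥ N`, `x ∈ ℝⁿ` and `R > 0`, `μ(B(x,(1+1/n)R)) ≤ K μ(B(x,R))`. -/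
theorem stmt_9 (w₀ : ℝ → ℝ) (hw : ∀ r : ℝ, 0 < r → 0 < w₀ r)
    (β : ℝ) (hβ : 1 ≤ β)
    (hdyad : ∀ R : ℝ, 0 < R → ∀ s ∈ Set.Icc R (2 * R), ∀ t ∈ Set.Icc R (2 * R),
      w₀ s ≤ β * w₀ t) :
    ∃ N : ℕ, ∃ K : ℝ≥0∞, K ≠ ∞ ∧
      ∀ n : ℕ, N ≤ n → ∀ (x : EuclideanSpace ℝ (Fin n)) (R : ℝ), 0 < R →
        ∫⁻ y in ball x ((1 + 1 / (n : ℝ)) * R), ENNReal.ofReal (w₀ ‖y‖)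
          ≤ K * ∫⁻ y in ball x R, ENNReal.ofReal (w₀ ‖y‖) := by
  obtain ⟨m, hm⟩ := pow_unbounded_of_one_lt (2 * β) one_lt_two
  refine ⟨m + 3, ENNReal.ofReal (3 * β ^ 4 + 4 * β ^ 7), ENNReal.ofReal_ne_top,
    fun n hn x R hR => ?_⟩
  have hfin : finrank ℝ (EuclideanSpace ℝ (Fin n)) = n := finrank_euclideanSpace_fin
  have : Nontrivial (EuclideanSpace ℝ (Fin n)) := finrank_pos_iff (R := ℝ).mp (by omega)
  have hd : 2 * β ≤ 2 ^ finrank ℝ (EuclideanSpace ℝ (Fin n)) := by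
    rw [hfin]
    exact hm.le.trans (pow_le_pow_right₀ one_le_two (by omega))
  have hn3 : (3 : ℝ) ≤ n := by exact_mod_cast (by omega : 3 ≤ n)
  have hδ : 3 * (1 / (n : ℝ)) ≤ 1 := by
    rw [mul_one_div, div_le_one (by positivity)]
    exact hn3
  have hvol : (1 + 1 / (n : ℝ)) ^ finrank ℝ (EuclideanSpace ℝ (Fin n)) ≤ 3 := by
    rw [hfin, one_div]
    exact Real.one_add_inv_pow_le_exp.trans (Real.exp_one_lt_d9.le.trans (by norm_num))
  simp only [← radialMeasure_apply]
  refine (radialMeasure_ball_one_add_mul_le volume hdyad hβ (fun r hr => (hw r hr).le) hd x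
    (by positivity) hδ hR).trans ?_
  gcongr ENNReal.ofReal ?_ * _
  nlinarith [mul_le_mul_of_nonneg_left hvol (pow_nonneg (zero_le_one.trans hβ) 4)]
end

section
/- Let w₀ : [0,∞) → (0,∞) be decreasing, and suppose the measure μ with density w₀(|x|) is weakly doubling in ℝ^N with constant K₁ for some N ≥ 1 (μ(B(y,R)) ≤ K₁ μ(B(x,R)) whenever balls of equal radius R intersect). Then w₀ satisfies w₀(R) ≤ K₁² w₀(2R) for all R > 0; consequently w₀ is essentially constant over dyadic intervals with constant K₁². -/
open MeasureTheory Metric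
open scoped ENNReal

/-- If `w₀` is decreasing on `[0,∞)` and the measure `μ = w₀(|x|)dx` is weakly doubling
with constant `K₁` in `ℝ^N` for some `N ≥ 1`, then `w₀(R) ≤ K₁² w₀(2R)` for all `R > 0`;
in particular `w₀` is essentially constant over dyadic intervals with constant `K₁²`. -/
theorem stmt_13 (N : ℕ) (hN : 1 ≤ N) (w₀ : ℝ → ℝ)
    (hw : ∀ r : ℝ, 0 ≤ r → 0 < w₀ r)
    (hdec : ∀ s t : ℝ, 0 ≤ s → s ≤ t → w₀ t ≤ w₀ s)
    (μ : Measure (EuclideanSpace ℝ (Fin N)))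
    (hμ : μ = volume.withDensity fun x => ENNReal.ofReal (w₀ ‖x‖))
    (K₁ : ℝ) (hK₁ : 0 < K₁)
    (hwd : ∀ (x y : EuclideanSpace ℝ (Fin N)) (R : ℝ), 0 < R →
      (ball x R ∩ ball y R).Nonempty →
      μ (ball y R) ≤ ENNReal.ofReal K₁ * μ (ball x R)) :
    (∀ R : ℝ, 0 < R → w₀ R ≤ K₁ ^ 2 * w₀ (2 * R)) ∧
    (∀ R : ℝ, 0 < R → ∀ s ∈ Set.Icc R (2 * R), ∀ t ∈ Set.Icc R (2 * R),
      w₀ s ≤ K₁ ^ 2 * w₀ t) := by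
  -- a measurable version of the density
  set g : ℝ → ℝ := fun t => w₀ (max t 0) with hg
  have hganti : Antitone g := by
    intro a b hab
    exact hdec _ _ (le_max_right a 0) (max_le_max hab le_rfl)
  have hgmeas : Measurable g := hganti.measurable
  have hgnorm : ∀ x : EuclideanSpace ℝ (Fin N), g ‖x‖ = w₀ ‖x‖ := by
    intro x; simp [hg, max_eq_left (norm_nonneg x)]
  have hμ' : μ = volume.withDensity fun x => ENNReal.ofReal (g ‖x‖) := by
    rw [hμ]; congr 1; funext x; rw [hgnorm]
  have hfmeas : Measurable fun x : EuclideanSpace ℝ (Fin N) => ENNReal.ofReal (g ‖x‖) :=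
    (hgmeas.comp measurable_norm).ennreal_ofReal
  -- the unit vector
  set e : EuclideanSpace ℝ (Fin N) := EuclideanSpace.single ⟨0, hN⟩ (1 : ℝ) with he
  have hnorme : ‖e‖ = 1 := by
    rw [he, EuclideanSpace.norm_single]; simp
  have hnormsmul : ∀ a : ℝ, ‖a • e‖ = |a| := by
    intro a; rw [norm_smul, hnorme, mul_one, Real.norm_eq_abs]
  have hdist : ∀ a b : ℝ, dist (a • e) (b • e) = |a - b| := by
    intro a b; rw [dist_eq_norm, ← sub_smul, hnormsmul]
  have key : ∀ R : ℝ, 0 < R → w₀ R ≤ K₁ ^ 2 * w₀ (2 * R) := by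
    intro R hR
    set r : ℝ := 3 * R / 4 with hr
    have hrpos : 0 < r := by positivity
    set c₁ : EuclideanSpace ℝ (Fin N) := (R / 4) • e with hc₁
    set c₂ : EuclideanSpace ℝ (Fin N) := (3 * R / 2) • e with hc₂
    set c₃ : EuclideanSpace ℝ (Fin N) := (11 * R / 4) • e with hc₃
    have hμball : ∀ c : EuclideanSpace ℝ (Fin N),
        μ (ball c r) = ∫⁻ x in ball c r, ENNReal.ofReal (g ‖x‖) := by
      intro c; rw [hμ', withDensity_apply _ measurableSet_ball]
    -- lower bound on the inner ball
    have hlow : ENNReal.ofReal (w₀ R) * volume (ball c₁ r) ≤ μ (ball c₁ r) := by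
      rw [hμball, ← setLIntegral_const]
      refine setLIntegral_mono hfmeas ?_
      intro x hx
      have hxnorm : ‖x‖ ≤ R := by
        have h1 : ‖x - c₁‖ < r := mem_ball_iff_norm.mp hx
        have h2 : ‖c₁‖ = R / 4 := by
          rw [hc₁, hnormsmul, abs_of_nonneg (by linarith)]
        calc ‖x‖ = ‖x - c₁ + c₁‖ := by rw [sub_add_cancel]
          _ ≤ ‖x - c₁‖ + ‖c₁‖ := norm_add_le _ _
          _ ≤ r + R / 4 := by linarith [h1.le]
          _ = R := by rw [hr]; ring
      refine ENNReal.ofReal_le_ofReal ?_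
      rw [hgnorm]
      exact hdec _ _ (norm_nonneg x) hxnorm
    -- upper bound on the outer ball
    have hup : μ (ball c₃ r) ≤ ENNReal.ofReal (w₀ (2 * R)) * volume (ball c₃ r) := by
      rw [hμball, ← setLIntegral_const]
      refine setLIntegral_mono measurable_const ?_
      intro x hx
      have hxnorm : 2 * R ≤ ‖x‖ := by
        have h1 : ‖c₃ - x‖ < r := mem_ball_iff_norm'.mp hx
        have h2 : ‖c₃‖ = 11 * R / 4 := by
          rw [hc₃, hnormsmul, abs_of_nonneg (by linarith)]
        have h3 : ‖c₃‖ ≤ ‖c₃ - x‖ + ‖x‖ := by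
          calc ‖c₃‖ = ‖c₃ - x + x‖ := by rw [sub_add_cancel]
            _ ≤ ‖c₃ - x‖ + ‖x‖ := norm_add_le _ _
        rw [h2] at h3
        have : 11 * R / 4 - r ≤ ‖x‖ := by linarith [h1.le]
        rw [hr] at this; linarith
      refine ENNReal.ofReal_le_ofReal ?_
      rw [hgnorm]
      exact hdec _ _ (by linarith) hxnorm
    -- doubling steps
    have hd1 : μ (ball c₁ r) ≤ ENNReal.ofReal K₁ * μ (ball c₂ r) := by
      refine hwd c₂ c₁ r hrpos ⟨(7 * R / 8) • e, ?_, ?_⟩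
      · rw [mem_ball, hc₂, hdist]
        rw [abs_of_nonpos (by linarith)]; rw [hr]; linarith
      · rw [mem_ball, hc₁, hdist]
        rw [abs_of_nonneg (by linarith)]; rw [hr]; linarith
    have hd2 : μ (ball c₂ r) ≤ ENNReal.ofReal K₁ * μ (ball c₃ r) := by
      refine hwd c₃ c₂ r hrpos ⟨(17 * R / 8) • e, ?_, ?_⟩
      · rw [mem_ball, hc₃, hdist]
        rw [abs_of_nonpos (by linarith)]; rw [hr]; linarith
      · rw [mem_ball, hc₂, hdist]
        rw [abs_of_nonneg (by linarith)]; rw [hr]; linarith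
    -- volumes agree
    have hvol1 : volume (ball c₁ r) = volume (ball (0 : EuclideanSpace ℝ (Fin N)) r) :=
      Measure.addHaar_ball_center volume c₁ r
    have hvol3 : volume (ball c₃ r) = volume (ball (0 : EuclideanSpace ℝ (Fin N)) r) :=
      Measure.addHaar_ball_center volume c₃ r
    set V : ℝ≥0∞ := volume (ball (0 : EuclideanSpace ℝ (Fin N)) r) with hV
    have hVpos : V ≠ 0 := (measure_ball_pos volume 0 hrpos).ne'
    have hVfin : V ≠ ⊤ := measure_ball_lt_top.ne
    have chain : ENNReal.ofReal (w₀ R) * V ≤ ENNReal.ofReal (K₁ ^ 2 * w₀ (2 * R)) * V := by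
      calc ENNReal.ofReal (w₀ R) * V = ENNReal.ofReal (w₀ R) * volume (ball c₁ r) := by
            rw [hvol1]
        _ ≤ μ (ball c₁ r) := hlow
        _ ≤ ENNReal.ofReal K₁ * μ (ball c₂ r) := hd1
        _ ≤ ENNReal.ofReal K₁ * (ENNReal.ofReal K₁ * μ (ball c₃ r)) := by
            exact mul_le_mul_right hd2 _
        _ ≤ ENNReal.ofReal K₁ * (ENNReal.ofReal K₁ *
              (ENNReal.ofReal (w₀ (2 * R)) * volume (ball c₃ r))) := by
            exact mul_le_mul_right (mul_le_mul_right hup _) _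
        _ = ENNReal.ofReal (K₁ ^ 2 * w₀ (2 * R)) * V := by
            rw [hvol3, show K₁ ^ 2 * w₀ (2 * R) = K₁ * (K₁ * w₀ (2 * R)) by ring]
            rw [ENNReal.ofReal_mul hK₁.le, ENNReal.ofReal_mul hK₁.le, mul_assoc, mul_assoc]
    have hle : ENNReal.ofReal (w₀ R) ≤ ENNReal.ofReal (K₁ ^ 2 * w₀ (2 * R)) :=
      (ENNReal.mul_le_mul_iff_left hVpos hVfin).mp chain
    have hpos : 0 ≤ K₁ ^ 2 * w₀ (2 * R) := by
      have := hw (2 * R) (by linarith)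
      positivity
    exact (ENNReal.ofReal_le_ofReal_iff hpos).mp hle
  refine ⟨key, ?_⟩
  intro R hR s hs t ht
  have h1 : w₀ s ≤ w₀ R := hdec R s hR.le hs.1
  have h2 : w₀ (2 * R) ≤ w₀ t := hdec t (2 * R) (by linarith [hs.1, ht.1]; ) ht.2
  calc w₀ s ≤ w₀ R := h1
    _ ≤ K₁ ^ 2 * w₀ (2 * R) := key R hR
    _ ≤ K₁ ^ 2 * w₀ t := by
        have : (0:ℝ) ≤ K₁ ^ 2 := by positivity
        exact mul_le_mul_of_nonneg_left h2 this
end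

section
/- Fix T > 0, s ≥ 0, R > 0 with s² + R² = T², and let w₀ : [0,∞) → [0,∞) be continuous. For each n choose zⁿ ∈ ℝⁿ with |zⁿ| = s. Then the averages of w₀(|x|) over the balls B(zⁿ,R) ⊂ ℝⁿ converge to w₀(T) as n → ∞: lim_{n→∞} (1/|B(zⁿ,R)|) ∫_{B(zⁿ,R)} w₀(|x|) dx = w₀(T). -/
open MeasureTheory Metric Filter Topology ProbabilityTheory
open scoped ENNReal

/-!
Push the normalised Lebesgue measure on `B(zⁿ, R)` forward by `x ↦ ‖x‖`. Since `w₀` is continuous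
at `T` and bounded on `[0, s + R]`, it suffices that these probability measures on `ℝ` concentrate
at `T`. If `|‖x‖ - T| ≥ ε` then `|‖x‖² - T²| ≥ δ := εT`. By Stewart's identity
`‖x - c z‖² = (1 - c)‖x‖² + c‖x - z‖² - c(1 - c)‖z‖²` and `s² + R² = T²`, the points of `B(z, R)`
with `‖x‖² ≤ T² - δ` lie in the closed ball about `(1 - m) z`, and those with `‖x‖² ≥ T² + δ` in
the one about `(1 + m) z`, both of radius `ρ = √(R² - m δ + m² s²)`. For `m = δ / (δ + s²)` this
is `< R` and independent of the dimension, so these points have relative volume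
at most `2 (ρ / R)ⁿ → 0`.
-/

theorem tendsto_lintegral_of_tendsto_measure_compl_ball {α ι : Type*} [PseudoMetricSpace α]
    [MeasurableSpace α] [OpensMeasurableSpace α] {l : Filter ι} {μ : ι → Measure α}
    [∀ i, IsProbabilityMeasure (μ i)] {x₀ : α}
    (hμ : ∀ ε > 0, Tendsto (fun i ↦ μ i (ball x₀ ε)ᶜ) l (𝓝 0))
    {f : α → ℝ≥0∞} (hf : ContinuousAt f x₀) {M : ℝ≥0∞} (hM : M ≠ ∞)
    (hfM : ∀ i, ∀ᵐ x ∂μ i, f x ≤ M) :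
    Tendsto (fun i ↦ ∫⁻ x, f x ∂μ i) l (𝓝 (f x₀)) := by
  rw [tendsto_order]
  constructor
  · intro a ha
    obtain ⟨a', haa', ha'⟩ := exists_between ha
    obtain ⟨ε, hε, hfε⟩ := eventually_nhds_iff_ball.1 (hf.eventually (lt_mem_nhds ha'))
    have hball : Tendsto (fun i ↦ a' * μ i (ball x₀ ε)) l (𝓝 a') := by
      have h := ENNReal.Tendsto.sub tendsto_const_nhds (hμ ε hε) (Or.inl ENNReal.one_ne_top)
      simp only [← prob_compl_eq_one_sub measurableSet_ball.compl, compl_compl,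
        tsub_zero] at h
      simpa using ENNReal.Tendsto.const_mul h (Or.inl one_ne_zero)
    filter_upwards [hball.eventually (lt_mem_nhds haa')] with i hi
    calc a < a' * μ i (ball x₀ ε) := hi
      _ = ∫⁻ _ in ball x₀ ε, a' ∂μ i := (setLIntegral_const _ _).symm
      _ ≤ ∫⁻ x in ball x₀ ε, f x ∂μ i :=
        setLIntegral_mono' measurableSet_ball fun x hx ↦ (hfε x hx).le
      _ ≤ ∫⁻ x, f x ∂μ i := setLIntegral_le_lintegral _ _
  · intro b hb
    obtain ⟨b', hbb', hb'⟩ := exists_between hb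
    obtain ⟨ε, hε, hfε⟩ := eventually_nhds_iff_ball.1 (hf.eventually (gt_mem_nhds hbb'))
    have hcompl : Tendsto (fun i ↦ b' + M * μ i (ball x₀ ε)ᶜ) l (𝓝 b') := by
      simpa using tendsto_const_nhds.add (ENNReal.Tendsto.const_mul (hμ ε hε) (Or.inr hM))
    filter_upwards [hcompl.eventually (gt_mem_nhds hb')] with i hi
    calc ∫⁻ x, f x ∂μ i
        = ∫⁻ x in ball x₀ ε, f x ∂μ i + ∫⁻ x in (ball x₀ ε)ᶜ, f x ∂μ i :=
          (lintegral_add_compl f measurableSet_ball).symm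
      _ ≤ ∫⁻ _ in ball x₀ ε, b' ∂μ i + ∫⁻ _ in (ball x₀ ε)ᶜ, M ∂μ i := by
          refine add_le_add ?_ (lintegral_mono_ae (ae_restrict_of_ae (hfM i)))
          exact setLIntegral_mono' measurableSet_ball fun x hx ↦ (hfε x hx).le
      _ = b' * μ i (ball x₀ ε) + M * μ i (ball x₀ ε)ᶜ := by simp only [setLIntegral_const]
      _ ≤ b' + M * μ i (ball x₀ ε)ᶜ := by gcongr; exact mul_le_of_le_one_right' prob_le_one
      _ < b := hi

lemma norm_sub_smul_sq {E : Type*} [NormedAddCommGroup E] [InnerProductSpace ℝ E]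
    (x z : E) (c : ℝ) :
    ‖x - c • z‖ ^ 2 = (1 - c) * ‖x‖ ^ 2 + c * ‖x - z‖ ^ 2 - c * (1 - c) * ‖z‖ ^ 2 := by
  rw [norm_sub_sq_real, norm_sub_sq_real, inner_smul_right, norm_smul, mul_pow,
    Real.norm_eq_abs, sq_abs]
  ring

lemma mem_closedBall_smul_union_of_le_abs_norm_sub {E : Type*} [NormedAddCommGroup E]
    [InnerProductSpace ℝ E] {s R T ε m : ℝ} (hT : 0 ≤ T)
    (hTsR : s ^ 2 + R ^ 2 = T ^ 2) (hm₀ : 0 ≤ m) (hm₁ : m ≤ 1) {z x : E} (hz : ‖z‖ = s)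
    (hxz : x ∈ ball z R) (hx : ε ≤ |‖x‖ - T|) :
    x ∈ closedBall ((1 - m) • z) √(R ^ 2 - m * (ε * T) + m ^ 2 * s ^ 2) ∪
      closedBall ((1 + m) • z) √(R ^ 2 - m * (ε * T) + m ^ 2 * s ^ 2) := by
  have hdist : ‖x - z‖ ^ 2 ≤ R ^ 2 := by
    rw [mem_ball, dist_eq_norm] at hxz
    exact pow_le_pow_left₀ (norm_nonneg _) hxz.le 2
  have hsq : ε * T ≤ |‖x‖ ^ 2 - T ^ 2| :=
    calc ε * T ≤ |‖x‖ - T| * T := mul_le_mul_of_nonneg_right hx hT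
      _ ≤ |‖x‖ - T| * (‖x‖ + T) := by gcongr; exact le_add_of_nonneg_left (norm_nonneg x)
      _ = |‖x‖ ^ 2 - T ^ 2| := by
        rw [sq_sub_sq, abs_mul, abs_of_nonneg (by positivity : 0 ≤ ‖x‖ + T), mul_comm]
  simp only [Set.mem_union, mem_closedBall, dist_eq_norm]
  rcases le_abs'.1 hsq with hin | hout
  · refine .inl (Real.le_sqrt_of_sq_le ?_)
    rw [norm_sub_smul_sq, hz]
    nlinarith [mul_le_mul_of_nonneg_left hdist (sub_nonneg.2 hm₁)]
  · refine .inr (Real.le_sqrt_of_sq_le ?_)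
    rw [norm_sub_smul_sq, hz]
    nlinarith [mul_le_mul_of_nonneg_left hdist (by linarith : 0 ≤ 1 + m)]

lemma addHaar_closedBall_eq_mul_addHaar_ball {E : Type*} [NormedAddCommGroup E]
    [NormedSpace ℝ E] [MeasurableSpace E] [BorelSpace E] [FiniteDimensional ℝ E]
    (μ : Measure E) [μ.IsAddHaarMeasure] (x y : E) {r R : ℝ} (hr : 0 ≤ r) (hR : 0 < R) :
    μ (closedBall x r) = ENNReal.ofReal ((r / R) ^ Module.finrank ℝ E) * μ (ball y R) := by
  rw [Measure.addHaar_closedBall μ x hr, Measure.addHaar_ball_of_pos μ y hR, ← mul_assoc,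
    ← ENNReal.ofReal_mul (by positivity), div_pow, div_mul_cancel₀ _ (by positivity)]

lemma cond_ball_preimage_norm_compl_ball_le {E : Type*} [NormedAddCommGroup E]
    [InnerProductSpace ℝ E] [MeasurableSpace E] [BorelSpace E] [FiniteDimensional ℝ E]
    (μ : Measure E) [μ.IsAddHaarMeasure] {s R T ε m : ℝ} (hT : 0 ≤ T) (hR : 0 < R)
    (hTsR : s ^ 2 + R ^ 2 = T ^ 2) (hm₀ : 0 ≤ m) (hm₁ : m ≤ 1) {z : E} (hz : ‖z‖ = s) :
    μ[(‖·‖) ⁻¹' (ball T ε)ᶜ | ball z R] ≤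
      2 * ENNReal.ofReal ((√(R ^ 2 - m * (ε * T) + m ^ 2 * s ^ 2) / R) ^ Module.finrank ℝ E) := by
  set ρ := √(R ^ 2 - m * (ε * T) + m ^ 2 * s ^ 2)
  have hfar : ball z R ∩ (‖·‖) ⁻¹' (ball T ε)ᶜ ⊆
      closedBall ((1 - m) • z) ρ ∪ closedBall ((1 + m) • z) ρ := fun x ⟨hxz, hx⟩ ↦
    mem_closedBall_smul_union_of_le_abs_norm_sub hT hTsR hm₀ hm₁ hz hxz
      (by simpa [Real.dist_eq] using hx)
  rw [cond_apply measurableSet_ball]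
  calc (μ (ball z R))⁻¹ * μ (ball z R ∩ (‖·‖) ⁻¹' (ball T ε)ᶜ)
      ≤ (μ (ball z R))⁻¹ *
          (μ (closedBall ((1 - m) • z) ρ) + μ (closedBall ((1 + m) • z) ρ)) := by
        gcongr
        exact (measure_mono hfar).trans (measure_union_le _ _)
    _ = 2 * ENNReal.ofReal ((ρ / R) ^ Module.finrank ℝ E) *
          ((μ (ball z R))⁻¹ * μ (ball z R)) := by
        rw [addHaar_closedBall_eq_mul_addHaar_ball μ _ z (Real.sqrt_nonneg _) hR,
          addHaar_closedBall_eq_mul_addHaar_ball μ _ z (Real.sqrt_nonneg _) hR]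
        ring
    _ = 2 * ENNReal.ofReal ((ρ / R) ^ Module.finrank ℝ E) := by
        rw [ENNReal.inv_mul_cancel (measure_ball_pos μ z hR).ne' measure_ball_lt_top.ne, mul_one]

lemma tendsto_cond_ball_preimage_norm_compl_ball {s R T ε : ℝ} (hT : 0 < T) (hR : 0 < R)
    (hTsR : s ^ 2 + R ^ 2 = T ^ 2) (hε : 0 < ε) (z : ∀ n : ℕ, EuclideanSpace ℝ (Fin (n + 1)))
    (hz : ∀ n, ‖z n‖ = s) :
    Tendsto (fun n ↦ volume[(‖·‖) ⁻¹' (ball T ε)ᶜ | ball (z n) R]) atTop (𝓝 0) := by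
  set m := ε * T / (ε * T + s ^ 2)
  have hεT : 0 < ε * T := by positivity
  have hm₀ : 0 < m := by positivity
  have hm₁ : m ≤ 1 := (div_le_one (by positivity)).2 (by nlinarith)
  have hm : m * (ε * T + s ^ 2) = ε * T := div_mul_cancel₀ _ (by positivity)
  set ρ := √(R ^ 2 - m * (ε * T) + m ^ 2 * s ^ 2)
  have hρR : ρ < R := by
    refine (Real.sqrt_lt' hR).2 ?_
    linear_combination m * hm + mul_pos (pow_pos hm₀ 2) hεT
  have hpow : Tendsto (fun n : ℕ ↦ 2 * ENNReal.ofReal ((ρ / R) ^ (n + 1))) atTop (𝓝 0) := by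
    have h := (tendsto_pow_atTop_nhds_zero_of_lt_one (by positivity)
      ((div_lt_one hR).2 hρR)).comp (tendsto_add_atTop_nat 1)
    simpa using ENNReal.Tendsto.const_mul (ENNReal.tendsto_ofReal h) (Or.inr ENNReal.ofNat_ne_top)
  refine tendsto_of_tendsto_of_tendsto_of_le_of_le tendsto_const_nhds hpow (fun _ ↦ zero_le)
    fun n ↦ ?_
  simpa only [finrank_euclideanSpace_fin] using
    cond_ball_preimage_norm_compl_ball_le volume hT.le hR hTsR hm₀.le hm₁ (hz n)

theorem stmt_14_general (T s R : ℝ) (hT : 0 < T) (hR : 0 < R)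
    (hTsR : s ^ 2 + R ^ 2 = T ^ 2)
    (w₀ : ℝ → ℝ) (hwc : Continuous w₀)
    (z : ∀ n : ℕ, EuclideanSpace ℝ (Fin (n + 1))) (hz : ∀ n, ‖z n‖ = s) :
    Tendsto
      (fun n : ℕ =>
        (volume (ball (z n) R))⁻¹ * ∫⁻ x in ball (z n) R, ENNReal.ofReal (w₀ ‖x‖))
      atTop (nhds (ENNReal.ofReal (w₀ T))) := by
  have : ∀ n, IsProbabilityMeasure (volume[|ball (z n) R]) := fun n ↦
    cond_isProbabilityMeasure_of_finite (measure_ball_pos _ _ hR).ne' measure_ball_lt_top.ne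
  have : ∀ n, IsProbabilityMeasure ((volume[|ball (z n) R]).map (‖·‖)) := fun n ↦
    Measure.isProbabilityMeasure_map measurable_norm.aemeasurable
  have havg : ∀ n, (volume (ball (z n) R))⁻¹ * ∫⁻ x in ball (z n) R, ENNReal.ofReal (w₀ ‖x‖) =
      ∫⁻ t, ENNReal.ofReal (w₀ t) ∂(volume[|ball (z n) R]).map (‖·‖) := fun n ↦ by
    rw [lintegral_map (by fun_prop) measurable_norm, ProbabilityTheory.cond,
      lintegral_smul_measure, smul_eq_mul]
  obtain ⟨M, hM⟩ := isCompact_Icc.bddAbove_image (hwc.continuousOn (s := Set.Icc 0 (s + R)))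
  simp_rw [havg]
  refine tendsto_lintegral_of_tendsto_measure_compl_ball (fun ε hε ↦ ?_)
    (ENNReal.continuous_ofReal.comp hwc).continuousAt
    ENNReal.ofReal_ne_top (M := ENNReal.ofReal M) fun n ↦ ?_
  · simpa only [Measure.map_apply measurable_norm measurableSet_ball.compl] using
      tendsto_cond_ball_preimage_norm_compl_ball hT hR hTsR hε z hz
  · rw [ae_map_iff measurable_norm.aemeasurable (measurableSet_le (by fun_prop) measurable_const)]
    filter_upwards [ae_cond_mem measurableSet_ball] with x hx
    refine ENNReal.ofReal_le_ofReal (hM ⟨‖x‖, ⟨norm_nonneg x, ?_⟩, rfl⟩)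
    simpa only [hz n, add_comm] using (norm_lt_of_mem_ball hx).le

/-- Differentiation through dimensions: fix `T > 0`, `s ≥ 0`, `R > 0` with
`s² + R² = T²`, let `w₀ : [0,∞) → [0,∞)` be continuous, and choose points
`zⁿ ∈ ℝⁿ` with `|zⁿ| = s`.  Then the averages of `w₀(|x|)` over the balls
`B(zⁿ, R) ⊂ ℝⁿ` converge to `w₀(T)` as `n → ∞`. -/
theorem stmt_14 (T s R : ℝ) (hT : 0 < T) (hs : 0 ≤ s) (hR : 0 < R)
    (hTsR : s ^ 2 + R ^ 2 = T ^ 2)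
    (w₀ : ℝ → ℝ) (hwc : Continuous w₀) (hw : ∀ r : ℝ, 0 ≤ w₀ r)
    (z : ∀ n : ℕ, EuclideanSpace ℝ (Fin (n + 1))) (hz : ∀ n, ‖z n‖ = s) :
    Tendsto
      (fun n : ℕ =>
        (volume (ball (z n) R))⁻¹ * ∫⁻ x in ball (z n) R, ENNReal.ofReal (w₀ ‖x‖))
      atTop (nhds (ENNReal.ofReal (w₀ T))) :=
  stmt_14_general T s R hT hR hTsR w₀ hwc z hz
end

section
/- For any ε > 0, T > 0, s ≥ 0, R > 0 with s² + R² = T² and zⁿ ∈ ℝⁿ with |zⁿ| = s: the set B(zⁿ,R) ∩ B_{T−ε} in ℝⁿ is contained in a Euclidean ball of some radius R₁ < R (with R₁ independent of n, depending only on s, R, ε), and similarly B(zⁿ,R) \ B_{T+ε} is contained in a ball of radius R₂ < R. Consequently |B(zⁿ,R) ∩ B_{T−ε}|/|B(zⁿ,R)| ≤ (R₁/R)ⁿ → 0 and |B(zⁿ,R) \ B_{T+ε}|/|B(zⁿ,R)| ≤ (R₂/R)ⁿ → 0 as n → ∞. -/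
/-!
For every `t`, `‖x - (1 - t) • z‖² = (1 - t) ‖x - z‖² + t ‖x‖² - t (1 - t) ‖z‖²`. If `‖z‖ = s`,
`s² + R² = T²`, `‖x - z‖ < R` and `‖x‖ ≤ ρ` with `0 < t ≤ 1`, the right-hand side is at most
`R² - t (T² - ρ²) + t² s²`, which is `< R²` for small `t` as soon as `ρ < T`. Taking `t < 0`
(moving the centre away from the origin) treats `‖x‖ > ρ > T` in the same way. The radii so
obtained depend only on `s, R, T, ρ`, not on the dimension, and in dimension `d` a closed ball of
radius `r` has `(r / R) ^ d` times the volume of a ball of radius `R`.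
-/

open MeasureTheory Metric Filter
open scoped ENNReal

section InnerProductSpace

variable {E : Type*} [NormedAddCommGroup E] [InnerProductSpace ℝ E]

theorem norm_sub_one_sub_smul_sq (x z : E) (t : ℝ) :
    ‖x - (1 - t) • z‖ ^ 2 =
      (1 - t) * ‖x - z‖ ^ 2 + t * ‖x‖ ^ 2 - t * (1 - t) * ‖z‖ ^ 2 := by
  have hx : x = (x - z) + z := by abel
  have hxt : x - (1 - t) • z = (x - z) + t • z := by rw [sub_smul, one_smul]; abel
  rw [hxt, norm_add_sq_real, real_inner_smul_right, norm_smul, mul_pow, Real.norm_eq_abs,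
    sq_abs]
  conv_rhs => rw [hx, norm_add_sq_real]
  simp only [add_sub_cancel_right]
  ring

theorem ball_inter_closedBall_zero_subset (z : E) {R ρ t : ℝ} (ht₀ : 0 ≤ t) (ht₁ : t ≤ 1) :
    ball z R ∩ closedBall 0 ρ ⊆
      closedBall ((1 - t) • z) √((1 - t) * R ^ 2 + t * ρ ^ 2 - t * (1 - t) * ‖z‖ ^ 2) := by
  rintro x ⟨hxz, hx⟩
  rw [mem_ball, dist_eq_norm] at hxz
  rw [mem_closedBall, dist_zero_right] at hx
  rw [mem_closedBall, dist_eq_norm]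
  refine Real.le_sqrt_of_sq_le ?_
  rw [norm_sub_one_sub_smul_sq]
  have hxz' : ‖x - z‖ ^ 2 ≤ R ^ 2 := by gcongr
  have hx' : ‖x‖ ^ 2 ≤ ρ ^ 2 := by gcongr
  have : 0 ≤ 1 - t := by linarith
  gcongr

theorem ball_diff_closedBall_zero_subset (z : E) {R ρ u : ℝ} (hρ : 0 ≤ ρ) (hu : 0 ≤ u) :
    ball z R \ closedBall 0 ρ ⊆
      closedBall ((1 + u) • z) √((1 + u) * R ^ 2 - u * ρ ^ 2 + u * (1 + u) * ‖z‖ ^ 2) := by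
  rintro x ⟨hxz, hx⟩
  rw [mem_ball, dist_eq_norm] at hxz
  rw [mem_closedBall, dist_zero_right, not_le] at hx
  have hxz' : ‖x - z‖ ^ 2 ≤ R ^ 2 := by gcongr
  have hx' : ρ ^ 2 ≤ ‖x‖ ^ 2 := by gcongr
  rw [mem_closedBall, dist_eq_norm]
  refine Real.le_sqrt_of_sq_le ?_
  rw [← sub_neg_eq_add, norm_sub_one_sub_smul_sq]
  nlinarith

end InnerProductSpace

theorem exists_mem_Ioc_mul_lt {a b : ℝ} (ha : 0 < a) (hb : 0 ≤ b) :
    ∃ t ∈ Set.Ioc (0 : ℝ) 1, t * b < a := by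
  obtain ⟨c, hc, hbc⟩ := exists_pos_mul_lt ha b
  refine ⟨min c 1, ⟨lt_min hc one_pos, min_le_right _ _⟩, ?_⟩
  calc min c 1 * b ≤ c * b := by gcongr; exact min_le_left _ _
    _ = b * c := mul_comm _ _
    _ < a := hbc

theorem exists_lt_forall_ball_inter_closedBall_subset {s R T ρ : ℝ} (hR : 0 < R)
    (hsRT : s ^ 2 + R ^ 2 = T ^ 2) (hρ : 0 ≤ ρ) (hρT : ρ < T) :
    ∃ r ∈ Set.Ico 0 R, ∀ (E : Type*) [NormedAddCommGroup E] [InnerProductSpace ℝ E]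
      (z : E), ‖z‖ = s → ∃ c : E, ball z R ∩ closedBall 0 ρ ⊆ closedBall c r := by
  obtain ⟨t, ⟨ht₀, ht₁⟩, hts⟩ :=
    exists_mem_Ioc_mul_lt (a := T ^ 2 - ρ ^ 2) (by nlinarith) (sq_nonneg s)
  refine ⟨√((1 - t) * R ^ 2 + t * ρ ^ 2 - t * (1 - t) * s ^ 2),
    ⟨Real.sqrt_nonneg _, ?_⟩, ?_⟩
  · rw [Real.sqrt_lt' hR]
    nlinarith
  · rintro E _ _ z rfl
    exact ⟨_, ball_inter_closedBall_zero_subset z ht₀.le ht₁⟩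

theorem exists_lt_forall_ball_diff_closedBall_subset {s R T ρ : ℝ} (hR : 0 < R)
    (hsRT : s ^ 2 + R ^ 2 = T ^ 2) (hT : 0 ≤ T) (hTρ : T < ρ) :
    ∃ r ∈ Set.Ico 0 R, ∀ (E : Type*) [NormedAddCommGroup E] [InnerProductSpace ℝ E]
      (z : E), ‖z‖ = s → ∃ c : E, ball z R \ closedBall 0 ρ ⊆ closedBall c r := by
  obtain ⟨u, hu, hus⟩ := exists_pos_mul_lt (a := ρ ^ 2 - T ^ 2) (by nlinarith) (s ^ 2)
  refine ⟨√((1 + u) * R ^ 2 - u * ρ ^ 2 + u * (1 + u) * s ^ 2),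
    ⟨Real.sqrt_nonneg _, ?_⟩, ?_⟩
  · rw [Real.sqrt_lt' hR]
    nlinarith
  · rintro E _ _ z rfl
    exact ⟨_, ball_diff_closedBall_zero_subset z (hT.trans hTρ.le) hu.le⟩

theorem measure_div_measure_ball_le_of_subset_closedBall {E : Type*} [NormedAddCommGroup E]
    [NormedSpace ℝ E] [MeasurableSpace E] [BorelSpace E] [FiniteDimensional ℝ E]
    (μ : Measure E) [μ.IsAddHaarMeasure] {S : Set E} {c z : E} {r R : ℝ} (hr : 0 ≤ r)
    (hR : 0 < R) (hS : S ⊆ closedBall c r) :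
    μ S / μ (ball z R) ≤ ENNReal.ofReal ((r / R) ^ Module.finrank ℝ E) := by
  rw [ENNReal.div_le_iff (measure_ball_pos μ z hR).ne' measure_ball_lt_top.ne]
  calc μ S ≤ μ (closedBall c r) := measure_mono hS
    _ = ENNReal.ofReal ((r / R) ^ Module.finrank ℝ E) * μ (ball z R) := by
      rw [Measure.addHaar_closedBall μ c hr, Measure.addHaar_ball_of_pos μ z hR, ← mul_assoc,
        ← ENNReal.ofReal_mul (by positivity), div_pow, div_mul_cancel₀ _ (by positivity)]

theorem ENNReal.tendsto_nhds_zero_of_le_ofReal_pow_succ {f : ℕ → ℝ≥0∞} {q : ℝ}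
    (hq₀ : 0 ≤ q) (hq₁ : q < 1) (hf : ∀ n, f n ≤ ENNReal.ofReal (q ^ (n + 1))) :
    Tendsto f atTop (nhds 0) := by
  have hpow : Tendsto (fun n ↦ ENNReal.ofReal q ^ (n + 1)) atTop (nhds 0) :=
    (ENNReal.tendsto_pow_atTop_nhds_zero_of_lt_one (ENNReal.ofReal_lt_one.2 hq₁)).comp
      (tendsto_add_atTop_nat 1)
  refine tendsto_of_tendsto_of_tendsto_of_le_of_le tendsto_const_nhds hpow (fun _ ↦ zero_le)
    fun n ↦ ?_
  simpa only [ENNReal.ofReal_pow hq₀] using hf n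

theorem stmt_15_general (T s R ε : ℝ) (hT : 0 < T) (hR : 0 < R) (hε : 0 < ε)
    (hTsR : s ^ 2 + R ^ 2 = T ^ 2)
    (z : ∀ n : ℕ, EuclideanSpace ℝ (Fin (n + 1))) (hz : ∀ n, ‖z n‖ = s) :
    ∃ R₁ ∈ Set.Ico (0 : ℝ) R, ∃ R₂ ∈ Set.Ico (0 : ℝ) R,
      (∀ n : ℕ, ∃ c : EuclideanSpace ℝ (Fin (n + 1)),
        ball (z n) R ∩ closedBall (0 : EuclideanSpace ℝ (Fin (n + 1))) (T - ε)
          ⊆ closedBall c R₁) ∧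
      (∀ n : ℕ, ∃ c : EuclideanSpace ℝ (Fin (n + 1)),
        ball (z n) R \ closedBall (0 : EuclideanSpace ℝ (Fin (n + 1))) (T + ε)
          ⊆ closedBall c R₂) ∧
      (∀ n : ℕ,
        volume (ball (z n) R ∩ closedBall (0 : EuclideanSpace ℝ (Fin (n + 1))) (T - ε)) /
            volume (ball (z n) R)
          ≤ ENNReal.ofReal ((R₁ / R) ^ (n + 1))) ∧
      (∀ n : ℕ,
        volume (ball (z n) R \ closedBall (0 : EuclideanSpace ℝ (Fin (n + 1))) (T + ε)) /
            volume (ball (z n) R)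
          ≤ ENNReal.ofReal ((R₂ / R) ^ (n + 1))) ∧
      Tendsto (fun n : ℕ =>
        volume (ball (z n) R ∩ closedBall (0 : EuclideanSpace ℝ (Fin (n + 1))) (T - ε)) /
          volume (ball (z n) R)) atTop (nhds 0) ∧
      Tendsto (fun n : ℕ =>
        volume (ball (z n) R \ closedBall (0 : EuclideanSpace ℝ (Fin (n + 1))) (T + ε)) /
          volume (ball (z n) R)) atTop (nhds 0) := by
  obtain ⟨R₁, ⟨hR₁₀, hR₁⟩, hin⟩ := exists_lt_forall_ball_inter_closedBall_subset hR hTsR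
    (le_max_right (T - ε) 0) (max_lt (by linarith) hT)
  obtain ⟨R₂, ⟨hR₂₀, hR₂⟩, hout⟩ := exists_lt_forall_ball_diff_closedBall_subset hR hTsR
    hT.le (by linarith : T < T + ε)
  have hsub₁ : ∀ n, ∃ c : EuclideanSpace ℝ (Fin (n + 1)),
      ball (z n) R ∩ closedBall 0 (T - ε) ⊆ closedBall c R₁ := fun n ↦ by
    obtain ⟨c, hc⟩ := hin _ (z n) (hz n)
    exact ⟨c, (Set.inter_subset_inter_right _
      (closedBall_subset_closedBall (le_max_left _ _))).trans hc⟩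
  have hsub₂ := fun n ↦ hout _ (z n) (hz n)
  have hvol₁ : ∀ n, volume (ball (z n) R ∩ closedBall 0 (T - ε)) / volume (ball (z n) R)
      ≤ ENNReal.ofReal ((R₁ / R) ^ (n + 1)) := fun n ↦ by
    obtain ⟨c, hc⟩ := hsub₁ n
    simpa only [finrank_euclideanSpace_fin] using
      measure_div_measure_ball_le_of_subset_closedBall volume hR₁₀ hR hc
  have hvol₂ : ∀ n, volume (ball (z n) R \ closedBall 0 (T + ε)) / volume (ball (z n) R)
      ≤ ENNReal.ofReal ((R₂ / R) ^ (n + 1)) := fun n ↦ by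
    obtain ⟨c, hc⟩ := hsub₂ n
    simpa only [finrank_euclideanSpace_fin] using
      measure_div_measure_ball_le_of_subset_closedBall volume hR₂₀ hR hc
  exact ⟨R₁, ⟨hR₁₀, hR₁⟩, R₂, ⟨hR₂₀, hR₂⟩, hsub₁, hsub₂, hvol₁, hvol₂,
    ENNReal.tendsto_nhds_zero_of_le_ofReal_pow_succ (by positivity) ((div_lt_one hR).2 hR₁) hvol₁,
    ENNReal.tendsto_nhds_zero_of_le_ofReal_pow_succ (by positivity) ((div_lt_one hR).2 hR₂) hvol₂⟩

/-- Geometric fact behind differentiation through dimensions: with `s² + R² = T²` and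
`‖zⁿ‖ = s`, for any `ε > 0` the sets `B(zⁿ,R) ∩ B̄_{T-ε}` and `B(zⁿ,R) \ B̄_{T+ε}` are
contained in balls of radii `R₁ < R` and `R₂ < R` (independent of `n`); consequently
their volume fractions inside `B(zⁿ,R)` are at most `(R₁/R)ⁿ⁺¹` and `(R₂/R)ⁿ⁺¹` and tend
to `0` as `n → ∞`. -/
theorem stmt_15 (T s R ε : ℝ) (hT : 0 < T) (hs : 0 ≤ s) (hR : 0 < R) (hε : 0 < ε)
    (hTsR : s ^ 2 + R ^ 2 = T ^ 2)
    (z : ∀ n : ℕ, EuclideanSpace ℝ (Fin (n + 1))) (hz : ∀ n, ‖z n‖ = s) :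
    ∃ R₁ ∈ Set.Ico (0 : ℝ) R, ∃ R₂ ∈ Set.Ico (0 : ℝ) R,
      (∀ n : ℕ, ∃ c : EuclideanSpace ℝ (Fin (n + 1)),
        ball (z n) R ∩ closedBall (0 : EuclideanSpace ℝ (Fin (n + 1))) (T - ε)
          ⊆ closedBall c R₁) ∧
      (∀ n : ℕ, ∃ c : EuclideanSpace ℝ (Fin (n + 1)),
        ball (z n) R \ closedBall (0 : EuclideanSpace ℝ (Fin (n + 1))) (T + ε)
          ⊆ closedBall c R₂) ∧
      (∀ n : ℕ,
        volume (ball (z n) R ∩ closedBall (0 : EuclideanSpace ℝ (Fin (n + 1))) (T - ε)) /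
            volume (ball (z n) R)
          ≤ ENNReal.ofReal ((R₁ / R) ^ (n + 1))) ∧
      (∀ n : ℕ,
        volume (ball (z n) R \ closedBall (0 : EuclideanSpace ℝ (Fin (n + 1))) (T + ε)) /
            volume (ball (z n) R)
          ≤ ENNReal.ofReal ((R₂ / R) ^ (n + 1))) ∧
      Tendsto (fun n : ℕ =>
        volume (ball (z n) R ∩ closedBall (0 : EuclideanSpace ℝ (Fin (n + 1))) (T - ε)) /
          volume (ball (z n) R)) atTop (nhds 0) ∧
      Tendsto (fun n : ℕ =>
        volume (ball (z n) R \ closedBall (0 : EuclideanSpace ℝ (Fin (n + 1))) (T + ε)) /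
          volume (ball (z n) R)) atTop (nhds 0) :=
  stmt_15_general T s R ε hT hR hε hTsR z hz
end

section
/- Let w₀ : [0,∞) → (0,∞) be decreasing and essentially constant over dyadic intervals with constant β. Then there exist N and C depending only on β such that the radial weight w(x) = w₀(|x|) is in A₁(ℝⁿ) with [w]_{A₁(ℝⁿ)} ≤ C for all n ≥ N; concretely, for all balls B(x,R): if |x| ≤ 2R then avg_{B(x,R)} w ≤ 2β³ ess inf_{B(x,R)} w, and if |x| ≥ 2R then avg_{B(x,R)} w ≤ β² ess inf_{B(x,R)} w. -/
/-!
Off the origin (`|x| ≥ 2R`) the norm varies by at most a factor `3` on `B(x,R)`, so `w` is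
constant there up to `β²`. Near the origin, cut `B(x,R)` into the part where `|y| ≥ R/2`, on
which `w ≤ β w₀(R)`, and the ball `B(0,R/2)`, which is a union of dyadic annuli: on the `j`-th
annulus `w` grows at most like `β^j` while the volume shrinks like `2^{-jn}`, so for `2β ≤ 2ⁿ`
the contributions form a geometric series and `∫_{B(x,R)} w ≤ 2β w₀(R) |B(x,R)|`, whereas
`w ≥ w₀(3R) ≥ β⁻² w₀(R)` on `B(x,R)`.
-/

open MeasureTheory Metric Set Module
open scoped ENNReal

def DyadicallyConstant {M : Type*} [Mul M] [LE M] (w : ℝ → M) (β : M) : Prop :=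
  ∀ R : ℝ, 0 < R → ∀ s ∈ Icc R (2 * R), ∀ t ∈ Icc R (2 * R), w s ≤ β * w t

namespace DyadicallyConstant

lemma ennreal_ofReal {w : ℝ → ℝ} {β : ℝ} (h : DyadicallyConstant w β) (hβ : 0 ≤ β) :
    DyadicallyConstant (fun t => ENNReal.ofReal (w t)) (ENNReal.ofReal β) :=
  fun R hR s hs t ht => by
    rw [← ENNReal.ofReal_mul hβ]
    exact ENNReal.ofReal_le_ofReal (h R hR s hs t ht)

variable {v : ℝ → ℝ≥0∞} {b : ℝ≥0∞}

lemma apply_le_mul (h : DyadicallyConstant v b) {s t : ℝ} (hs : 0 < s) (hst : s ≤ t)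
    (hts : t ≤ 2 * s) : v s ≤ b * v t :=
  h s hs s ⟨le_rfl, by linarith⟩ t ⟨hst, hts⟩

lemma apply_div_two_pow_le (h : DyadicallyConstant v b) {r : ℝ} (hr : 0 < r) (k : ℕ) :
    v (r / 2 ^ k) ≤ b ^ k * v r := by
  induction k with
  | zero => simp
  | succ k ih =>
    have hrk : 0 < r / 2 ^ k := by positivity
    calc v (r / 2 ^ (k + 1)) = v (r / 2 ^ k / 2) := by rw [pow_succ, div_div]
      _ ≤ b * v (r / 2 ^ k) := h.apply_le_mul (by linarith) (by linarith) (by linarith)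
      _ ≤ b * (b ^ k * v r) := by gcongr
      _ = b ^ (k + 1) * v r := by ring

lemma apply_le_pow_mul (h : DyadicallyConstant v b) (hv : AntitoneOn v (Ici 0)) {r s : ℝ}
    (hr : 0 < r) {k : ℕ} (hs : r / 2 ^ k ≤ s) : v s ≤ b ^ k * v r :=
  have hrk : 0 ≤ r / 2 ^ k := by positivity
  (hv hrk (hrk.trans hs) hs).trans (h.apply_div_two_pow_le hr k)

end DyadicallyConstant

lemma ENNReal.tsum_geometric_le_two {q : ℝ≥0∞} (hq : q ≤ 2⁻¹) : ∑' j : ℕ, q ^ j ≤ 2 := by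
  rw [ENNReal.tsum_geometric]
  calc (1 - q)⁻¹ ≤ (1 - 2⁻¹)⁻¹ := by gcongr
    _ = 2 := by rw [ENNReal.one_sub_inv_two, inv_inv]

lemma setLIntegral_le_mul_measure {α : Type*} [MeasurableSpace α] {μ : Measure α} {s : Set α}
    {f : α → ℝ≥0∞} {c : ℝ≥0∞} (hf : ∀ y ∈ s, f y ≤ c) : ∫⁻ y in s, f y ∂μ ≤ c * μ s :=
  (setLIntegral_mono measurable_const hf).trans (setLIntegral_const s c).le

lemma inv_measure_mul_setLIntegral_le_mul_essInf {α : Type*} [MeasurableSpace α]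
    {μ : Measure α} {s : Set α} {f : α → ℝ≥0∞} {c m : ℝ≥0∞} (hs : MeasurableSet s)
    (hint : ∫⁻ y in s, f y ∂μ ≤ c * m * μ s) (hm : ∀ y ∈ s, m ≤ f y) :
    (μ s)⁻¹ * ∫⁻ y in s, f y ∂μ ≤ c * essInf f (μ.restrict s) := by
  have hm' : m ≤ essInf f (μ.restrict s) :=
    le_essInf_of_ae_le m ((ae_restrict_mem hs).mono hm)
  calc (μ s)⁻¹ * ∫⁻ y in s, f y ∂μ ≤ (μ s)⁻¹ * (c * m * μ s) := by gcongr
    _ = c * m * ((μ s)⁻¹ * μ s) := by ring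
    _ ≤ c * m := mul_le_of_le_one_right' (ENNReal.inv_mul_le_one _)
    _ ≤ c * essInf f (μ.restrict s) := by gcongr

lemma closedBall_zero_subset_union_annuli {E : Type*} [NormedAddCommGroup E] (r : ℝ) :
    closedBall (0 : E) r ⊆
      {0} ∪ ⋃ j : ℕ, closedBall 0 (r / 2 ^ j) \ closedBall 0 (r / 2 ^ (j + 1)) := by
  intro y hy
  rcases eq_or_ne y 0 with rfl | hy_ne
  · exact Or.inl rfl
  have hy0 : 0 < ‖y‖ := norm_pos_iff.2 hy_ne
  obtain ⟨j, hj, hj'⟩ :=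
    exists_nat_pow_near ((one_le_div hy0).2 (mem_closedBall_zero_iff.1 hy)) one_lt_two
  refine Or.inr (mem_iUnion.2 ⟨j, ?_, ?_⟩)
  · rw [mem_closedBall_zero_iff, le_div_iff₀ (by positivity)]
    rwa [le_div_iff₀ hy0, mul_comm] at hj
  · rw [mem_closedBall_zero_iff, not_le, div_lt_iff₀ (by positivity)]
    rwa [div_lt_iff₀ hy0, mul_comm] at hj'

section Haar

variable {E : Type*} [NormedAddCommGroup E] [MeasurableSpace E] [BorelSpace E]
  (μ : Measure E) {v : ℝ → ℝ≥0∞} {b : ℝ≥0∞}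

lemma average_ball_le_of_two_mul_le_norm (hv : AntitoneOn v (Ici 0))
    (h : DyadicallyConstant v b) (x : E) {R : ℝ} (hR : 0 < R) (hx : 2 * R ≤ ‖x‖) :
    (μ (ball x R))⁻¹ * ∫⁻ y in ball x R, v ‖y‖ ∂μ
      ≤ b ^ 2 * essInf (fun y => v ‖y‖) (μ.restrict (ball x R)) := by
  refine inv_measure_mul_setLIntegral_le_mul_essInf (m := v (‖x‖ + R)) measurableSet_ball
    (setLIntegral_le_mul_measure fun y hy => ?_) fun y hy => ?_
  · have hxy : ‖x‖ < ‖y‖ + R := norm_lt_of_mem_ball (mem_ball_comm.1 hy)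
    calc v ‖y‖ ≤ b ^ 1 * v ‖x‖ := h.apply_le_pow_mul hv (by linarith) (by rw [pow_one]; linarith)
      _ ≤ b * (b * v (‖x‖ + R)) := by
          rw [pow_one]; gcongr; exact h.apply_le_mul (by linarith) (by linarith) (by linarith)
      _ = b ^ 2 * v (‖x‖ + R) := by ring
  · exact hv (norm_nonneg y) (add_nonneg (norm_nonneg x) hR.le) (norm_lt_of_mem_ball hy).le

variable [NormedSpace ℝ E] [FiniteDimensional ℝ E] [μ.IsAddHaarMeasure]

lemma measure_closedBall_div_two_pow (x : E) {r : ℝ} (hr : 0 ≤ r) (j : ℕ) :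
    μ (closedBall x (r / 2 ^ j)) = ((2 : ℝ≥0∞) ^ finrank ℝ E)⁻¹ ^ j * μ (closedBall x r) := by
  rw [div_eq_inv_mul, Measure.addHaar_closedBall_mul μ x (by positivity) hr,
    ← Measure.addHaar_closedBall_center μ x r, ENNReal.ofReal_pow (by positivity),
    ENNReal.ofReal_inv_of_pos (by positivity), ENNReal.ofReal_pow zero_le_two,
    ENNReal.ofReal_ofNat, ← ENNReal.inv_pow, ← ENNReal.inv_pow, ← pow_mul, ← pow_mul,
    Nat.mul_comm j]

variable [Nontrivial E]

lemma setLIntegral_closedBall_zero_le (hv : AntitoneOn v (Ici 0)) (h : DyadicallyConstant v b)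
    (hb : 2 * b ≤ 2 ^ finrank ℝ E) {r : ℝ} (hr : 0 < r) :
    ∫⁻ y in closedBall (0 : E) r, v ‖y‖ ∂μ ≤ 2 * b * v r * μ (closedBall 0 r) := by
  set q := b * ((2 : ℝ≥0∞) ^ finrank ℝ E)⁻¹
  let A : ℕ → Set E := fun j => closedBall 0 (r / 2 ^ j) \ closedBall 0 (r / 2 ^ (j + 1))
  have hcover : closedBall (0 : E) r ⊆ {0} ∪ ⋃ j, A j := closedBall_zero_subset_union_annuli r
  have hA : ∀ j, ∫⁻ y in A j, v ‖y‖ ∂μ ≤ b * v r * μ (closedBall 0 r) * q ^ j := fun j =>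
    calc ∫⁻ y in A j, v ‖y‖ ∂μ ≤ b ^ (j + 1) * v r * μ (A j) :=
          setLIntegral_le_mul_measure fun y hy =>
            h.apply_le_pow_mul hv hr (not_le.1 (mem_closedBall_zero_iff.not.1 hy.2)).le
      _ ≤ b ^ (j + 1) * v r * μ (closedBall 0 (r / 2 ^ j)) := by gcongr; exact sdiff_subset
      _ = b * v r * μ (closedBall 0 r) * q ^ j := by
          rw [measure_closedBall_div_two_pow μ 0 hr.le]; ring
  have hq : q ≤ 2⁻¹ := by
    rw [ENNReal.le_inv_iff_mul_le, mul_comm, ← mul_assoc, ← div_eq_mul_inv]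
    exact ENNReal.div_le_of_le_mul (by rwa [one_mul])
  calc ∫⁻ y in closedBall 0 r, v ‖y‖ ∂μ ≤ ∫⁻ y in {0} ∪ ⋃ j, A j, v ‖y‖ ∂μ :=
        lintegral_mono_set hcover
    _ ≤ ∫⁻ y in {0}, v ‖y‖ ∂μ + ∑' j, ∫⁻ y in A j, v ‖y‖ ∂μ :=
        (lintegral_union_le _ _ _).trans (add_le_add le_rfl (lintegral_iUnion_le _ _))
    _ ≤ 0 + ∑' j, b * v r * μ (closedBall 0 r) * q ^ j := by
        rw [setLIntegral_measure_zero _ _ (measure_singleton 0)]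
        exact add_le_add le_rfl (ENNReal.tsum_le_tsum hA)
    _ ≤ b * v r * μ (closedBall 0 r) * 2 := by
        rw [zero_add, ENNReal.tsum_mul_left]; gcongr; exact ENNReal.tsum_geometric_le_two hq
    _ = 2 * b * v r * μ (closedBall 0 r) := by ring

lemma setLIntegral_ball_le (hv : AntitoneOn v (Ici 0)) (h : DyadicallyConstant v b)
    (hb : 2 * b ≤ 2 ^ finrank ℝ E) (x : E) {R : ℝ} (hR : 0 < R) :
    ∫⁻ y in ball x R, v ‖y‖ ∂μ ≤ 2 * b * v R * μ (ball x R) := by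
  have hsplit : ball x R ⊆ (ball x R ∩ {y | R / 2 ≤ ‖y‖}) ∪ closedBall 0 (R / 2) := by
    intro y hy
    rcases le_or_gt (R / 2) ‖y‖ with hy' | hy'
    · exact Or.inl ⟨hy, hy'⟩
    · exact Or.inr (mem_closedBall_zero_iff.2 hy'.le)
  have houter : ∫⁻ y in ball x R ∩ {y | R / 2 ≤ ‖y‖}, v ‖y‖ ∂μ ≤ b * v R * μ (ball x R) :=
    calc ∫⁻ y in ball x R ∩ {y | R / 2 ≤ ‖y‖}, v ‖y‖ ∂μ
        ≤ b ^ 1 * v R * μ (ball x R ∩ {y | R / 2 ≤ ‖y‖}) :=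
          setLIntegral_le_mul_measure fun y hy => h.apply_le_pow_mul hv hR (by simpa using hy.2)
      _ ≤ b * v R * μ (ball x R) := by rw [pow_one]; gcongr; exact inter_subset_left
  have hinner : ∫⁻ y in closedBall 0 (R / 2), v ‖y‖ ∂μ ≤ b * v R * μ (ball x R) :=
    calc ∫⁻ y in closedBall 0 (R / 2), v ‖y‖ ∂μ ≤ 2 * b * v (R / 2) * μ (closedBall 0 (R / 2)) :=
          setLIntegral_closedBall_zero_le μ hv h hb (by positivity)
      _ ≤ 2 * b * (b * v R) * (((2 : ℝ≥0∞) ^ finrank ℝ E)⁻¹ * μ (ball x R)) := by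
          gcongr
          · simpa using h.apply_div_two_pow_le hR 1
          · rw [← pow_one (2 : ℝ), measure_closedBall_div_two_pow μ 0 hR.le, pow_one,
              Measure.addHaar_closedBall_eq_addHaar_ball, ← Measure.addHaar_ball_center μ x]
      _ = b * v R * μ (ball x R) * (2 * b / 2 ^ finrank ℝ E) := by rw [div_eq_mul_inv]; ring
      _ ≤ b * v R * μ (ball x R) :=
          mul_le_of_le_one_right' (ENNReal.div_le_of_le_mul (by rwa [one_mul]))
  calc ∫⁻ y in ball x R, v ‖y‖ ∂μ
      ≤ ∫⁻ y in (ball x R ∩ {y | R / 2 ≤ ‖y‖}) ∪ closedBall 0 (R / 2), v ‖y‖ ∂μ :=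
        lintegral_mono_set hsplit
    _ ≤ b * v R * μ (ball x R) + b * v R * μ (ball x R) :=
        (lintegral_union_le _ _ _).trans (add_le_add houter hinner)
    _ = 2 * b * v R * μ (ball x R) := by ring

lemma average_ball_le_of_norm_le_two_mul (hv : AntitoneOn v (Ici 0))
    (h : DyadicallyConstant v b) (hb : 2 * b ≤ 2 ^ finrank ℝ E) (x : E) {R : ℝ} (hR : 0 < R)
    (hx : ‖x‖ ≤ 2 * R) :
    (μ (ball x R))⁻¹ * ∫⁻ y in ball x R, v ‖y‖ ∂μ
      ≤ 2 * b ^ 3 * essInf (fun y => v ‖y‖) (μ.restrict (ball x R)) := by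
  have hR3 : v R ≤ b ^ 2 * v (3 * R) :=
    calc v R ≤ b * v (2 * R) := h.apply_le_mul hR (by linarith) le_rfl
      _ ≤ b * (b * v (3 * R)) := by
          gcongr; exact h.apply_le_mul (by linarith) (by linarith) (by linarith)
      _ = b ^ 2 * v (3 * R) := by ring
  refine inv_measure_mul_setLIntegral_le_mul_essInf (m := v (3 * R)) measurableSet_ball ?_
    fun y hy => hv (norm_nonneg y) (by simp only [mem_Ici]; linarith)
      (by linarith [norm_lt_of_mem_ball hy])
  calc ∫⁻ y in ball x R, v ‖y‖ ∂μ ≤ 2 * b * v R * μ (ball x R) :=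
        setLIntegral_ball_le μ hv h hb x hR
    _ ≤ 2 * b * (b ^ 2 * v (3 * R)) * μ (ball x R) := by gcongr
    _ = 2 * b ^ 3 * v (3 * R) * μ (ball x R) := by ring

end Haar

theorem stmt_16_general (w₀ : ℝ → ℝ)
    (hdec : ∀ s t : ℝ, 0 ≤ s → s ≤ t → w₀ t ≤ w₀ s)
    (β : ℝ) (hβ : 1 ≤ β)
    (hdyad : ∀ R : ℝ, 0 < R → ∀ s ∈ Set.Icc R (2 * R), ∀ t ∈ Set.Icc R (2 * R),
      w₀ s ≤ β * w₀ t) :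
    ∃ N : ℕ, ∃ C : ℝ, 0 < C ∧
      ∀ n : ℕ, N ≤ n → ∀ (x : EuclideanSpace ℝ (Fin n)) (R : ℝ), 0 < R →
        ((volume (ball x R))⁻¹ * ∫⁻ y in ball x R, ENNReal.ofReal (w₀ ‖y‖)
            ≤ ENNReal.ofReal C *
              essInf (fun y => ENNReal.ofReal (w₀ ‖y‖)) (volume.restrict (ball x R))) ∧
        (‖x‖ ≤ 2 * R →
          (volume (ball x R))⁻¹ * ∫⁻ y in ball x R, ENNReal.ofReal (w₀ ‖y‖)
            ≤ ENNReal.ofReal (2 * β ^ 3) *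
              essInf (fun y => ENNReal.ofReal (w₀ ‖y‖)) (volume.restrict (ball x R))) ∧
        (2 * R ≤ ‖x‖ →
          (volume (ball x R))⁻¹ * ∫⁻ y in ball x R, ENNReal.ofReal (w₀ ‖y‖)
            ≤ ENNReal.ofReal (β ^ 2) *
              essInf (fun y => ENNReal.ofReal (w₀ ‖y‖)) (volume.restrict (ball x R))) := by
  have hv : AntitoneOn (fun t => ENNReal.ofReal (w₀ t)) (Ici 0) :=
    fun s hs t _ hst => ENNReal.ofReal_le_ofReal (hdec s t hs hst)
  have h := DyadicallyConstant.ennreal_ofReal hdyad (by linarith)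
  have hb1 : 1 ≤ ENNReal.ofReal β := ENNReal.one_le_ofReal.2 hβ
  obtain ⟨N, hN⟩ := pow_unbounded_of_one_lt (2 * β) (one_lt_two (α := ℝ))
  refine ⟨N, 2 * β ^ 3, by positivity, fun n hn x R hR => ?_⟩
  have h2β : 2 * β ≤ 2 ^ n := hN.le.trans (pow_le_pow_right₀ one_le_two hn)
  have hb : 2 * ENNReal.ofReal β ≤ 2 ^ finrank ℝ (EuclideanSpace ℝ (Fin n)) := by
    rw [finrank_euclideanSpace_fin, ← ENNReal.ofReal_ofNat 2, ← ENNReal.ofReal_mul zero_le_two,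
      ← ENNReal.ofReal_pow zero_le_two]
    exact ENNReal.ofReal_le_ofReal h2β
  have : Nontrivial (EuclideanSpace ℝ (Fin n)) := by
    refine Module.nontrivial_of_finrank_pos (R := ℝ) ?_
    rw [finrank_euclideanSpace_fin, Nat.pos_iff_ne_zero]
    rintro rfl
    linarith
  have hnear := average_ball_le_of_norm_le_two_mul volume hv h hb x hR
  have hfar := average_ball_le_of_two_mul_le_norm volume hv h x hR
  rw [ENNReal.ofReal_mul zero_le_two, ENNReal.ofReal_ofNat, ENNReal.ofReal_pow (by linarith),
    ENNReal.ofReal_pow (by linarith)]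
  refine ⟨?_, hnear, hfar⟩
  rcases le_total ‖x‖ (2 * R) with hx | hx
  · exact hnear hx
  · refine (hfar hx).trans ?_
    gcongr
    calc ENNReal.ofReal β ^ 2 ≤ ENNReal.ofReal β ^ 3 := pow_le_pow_right₀ hb1 (by norm_num)
      _ ≤ 2 * ENNReal.ofReal β ^ 3 := le_mul_of_one_le_left' one_le_two

/-- If `w₀ : [0,∞) → (0,∞)` is decreasing and essentially constant over dyadic intervals
with constant `β`, then there are `N` and `C` depending only on `β` such that
`w(x) = w₀(|x|)` is an `A₁(ℝⁿ)` weight with `[w]_{A₁} ≤ C` for all `n ≥ N`; concretely,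
for every ball `B(x,R)`: if `|x| ≤ 2R` then `avg_{B(x,R)} w ≤ 2β³ essinf_{B(x,R)} w`, and
if `|x| ≥ 2R` then `avg_{B(x,R)} w ≤ β² essinf_{B(x,R)} w`. -/
theorem stmt_16 (w₀ : ℝ → ℝ) (hw : ∀ r : ℝ, 0 ≤ r → 0 < w₀ r)
    (hdec : ∀ s t : ℝ, 0 ≤ s → s ≤ t → w₀ t ≤ w₀ s)
    (β : ℝ) (hβ : 1 ≤ β)
    (hdyad : ∀ R : ℝ, 0 < R → ∀ s ∈ Set.Icc R (2 * R), ∀ t ∈ Set.Icc R (2 * R),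
      w₀ s ≤ β * w₀ t) :
    ∃ N : ℕ, ∃ C : ℝ, 0 < C ∧
      ∀ n : ℕ, N ≤ n → ∀ (x : EuclideanSpace ℝ (Fin n)) (R : ℝ), 0 < R →
        ((volume (ball x R))⁻¹ * ∫⁻ y in ball x R, ENNReal.ofReal (w₀ ‖y‖)
            ≤ ENNReal.ofReal C *
              essInf (fun y => ENNReal.ofReal (w₀ ‖y‖)) (volume.restrict (ball x R))) ∧
        (‖x‖ ≤ 2 * R →
          (volume (ball x R))⁻¹ * ∫⁻ y in ball x R, ENNReal.ofReal (w₀ ‖y‖)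
            ≤ ENNReal.ofReal (2 * β ^ 3) *
              essInf (fun y => ENNReal.ofReal (w₀ ‖y‖)) (volume.restrict (ball x R))) ∧
        (2 * R ≤ ‖x‖ →
          (volume (ball x R))⁻¹ * ∫⁻ y in ball x R, ENNReal.ofReal (w₀ ‖y‖)
            ≤ ENNReal.ofReal (β ^ 2) *
              essInf (fun y => ENNReal.ofReal (w₀ ‖y‖)) (volume.restrict (ball x R))) :=
  stmt_16_general w₀ hdec β hβ hdyad
end

section
/- Let μ be a rotation-invariant measure on ℝⁿ with a radially decreasing density, and suppose M_μ δ₀ is radially decreasing. If the weak (1,1) inequality μ({x : M_μ δ₀(x) > λ}) ≤ C/λ holds for all λ > 0, then for any z ∈ ℝⁿ with |z| = 1, taking λ = M_μ δ₀(z) yields C ≥ μ(B₁)/μ⁺(B(z,1)), where μ⁺(B(z,1)) = inf_{r>1} μ(B(z,r)). In particular the weak (1,1) constant of M_μ is at least μ(B₁)/μ⁺(B(z,1)). -/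
open MeasureTheory Metric Filter
open scoped ENNReal Topology

/-- Lower bound for the weak (1,1) constant via the Dirac mass at the origin: if `μ` is a
locally finite measure on `ℝⁿ` with all balls of positive measure, the maximal function
`M_μ δ₀ (x) = (inf_{r>|x|} μ(B(x,r)))⁻¹` is radially decreasing, and the weak type
inequality `μ({M_μ δ₀ > λ}) ≤ C/λ` holds for all `λ > 0`, then for every `z` with
`‖z‖ = 1` one has `μ(B₁) ≤ C μ⁺(B(z,1))`, i.e. `C ≥ μ(B₁)/μ⁺(B(z,1))` where
`μ⁺(B(z,1)) = inf_{r>1} μ(B(z,r))`. -/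
theorem stmt_19 (n : ℕ) (μ : Measure (EuclideanSpace ℝ (Fin n)))
    [IsLocallyFiniteMeasure μ]
    (hpos : ∀ (x : EuclideanSpace ℝ (Fin n)) (r : ℝ), 0 < r → 0 < μ (ball x r))
    (Mδ : EuclideanSpace ℝ (Fin n) → ℝ≥0∞)
    (hMδ : ∀ x, Mδ x = (⨅ (r : ℝ) (_ : r ∈ Set.Ioi ‖x‖), μ (ball x r))⁻¹)
    (hrad : ∀ x y : EuclideanSpace ℝ (Fin n), ‖x‖ ≤ ‖y‖ → Mδ y ≤ Mδ x)
    (C : ℝ≥0∞)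
    (hweak : ∀ lam : ℝ≥0∞, 0 < lam → μ {x | lam < Mδ x} ≤ C / lam) :
    ∀ z : EuclideanSpace ℝ (Fin n), ‖z‖ = 1 →
      μ (ball (0 : EuclideanSpace ℝ (Fin n)) 1)
        ≤ C * ⨅ (r : ℝ) (_ : r ∈ Set.Ioi (1 : ℝ)), μ (ball z r) := by
  intro z hz
  set I : ℝ≥0∞ := ⨅ (r : ℝ) (_ : r ∈ Set.Ioi (1 : ℝ)), μ (ball z r) with hIdef
  have hI0 : 0 < I := by
    refine lt_of_lt_of_le (hpos z 1 one_pos) ?_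
    exact le_iInf₂ fun r hr => measure_mono (ball_subset_ball (le_of_lt hr))
  have hIfin : I < ∞ := by
    refine lt_of_le_of_lt (iInf₂_le 2 (by norm_num)) ?_
    exact measure_ball_lt_top
  have hMz : Mδ z = I⁻¹ := by rw [hMδ z, hz]
  -- key: for 0 < lam < I⁻¹, ball 0 1 ⊆ {lam < Mδ}
  have key : ∀ lam : ℝ≥0∞, 0 < lam → lam < I⁻¹ →
      μ (ball (0 : EuclideanSpace ℝ (Fin n)) 1) * lam ≤ C := by
    intro lam hlam hlamI
    have hsub : ball (0 : EuclideanSpace ℝ (Fin n)) 1 ⊆ {x | lam < Mδ x} := by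
      intro x hx
      have hxn : ‖x‖ ≤ ‖z‖ := by
        rw [hz]
        have := mem_ball.mp hx
        rw [dist_eq_norm, sub_zero] at this
        linarith
      exact lt_of_lt_of_le (hMz ▸ hlamI) (hrad x z hxn)
    have h1 : μ (ball (0 : EuclideanSpace ℝ (Fin n)) 1) ≤ C / lam :=
      (measure_mono hsub).trans (hweak lam hlam)
    have hlamfin : lam ≠ ∞ := (hlamI.trans_le le_top).ne
    rw [ENNReal.le_div_iff_mul_le (Or.inl hlam.ne') (Or.inl hlamfin)] at h1
    exact h1
  have hfin : μ (ball (0 : EuclideanSpace ℝ (Fin n)) 1) ≠ ∞ := measure_ball_lt_top.ne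
  have hIinv0 : 0 < I⁻¹ := ENNReal.inv_pos.mpr hIfin.ne
  -- pass to the limit lam → I⁻¹ from below
  have hlim : μ (ball (0 : EuclideanSpace ℝ (Fin n)) 1) * I⁻¹ ≤ C := by
    have hne : (𝓝[<] (I⁻¹)).NeBot := nhdsWithin_Iio_self_neBot' ⟨0, hIinv0⟩
    have htend : Tendsto (fun lam => μ (ball (0 : EuclideanSpace ℝ (Fin n)) 1) * lam)
        (𝓝[<] (I⁻¹)) (𝓝 (μ (ball (0 : EuclideanSpace ℝ (Fin n)) 1) * I⁻¹)) := by
      exact ENNReal.Tendsto.const_mul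
        (tendsto_nhdsWithin_of_tendsto_nhds tendsto_id) (Or.inr hfin)
    refine le_of_tendsto htend ?_
    filter_upwards [self_mem_nhdsWithin, Ioo_mem_nhdsLT hIinv0] with lam h1 h2
    exact key lam h2.1 h1
  calc μ (ball (0 : EuclideanSpace ℝ (Fin n)) 1)
      = μ (ball (0 : EuclideanSpace ℝ (Fin n)) 1) * I⁻¹ * I := by
        rw [mul_assoc, ENNReal.inv_mul_cancel hI0.ne' hIfin.ne, mul_one]
    _ ≤ C * I := mul_le_mul_left hlim I
end
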